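/- arXiv:1405.1613 — 10 statements merged into one kernel-verified Lean document; each statement's English description precedes it below -/
import Mathlib

section
/- Let G be a unital inverse semigroup, (A, α) a G-algebra, and u : G → M(A) an α-cocycle. Then ᾱ_g(u_{g⁻¹}) = u_g* for every g ∈ G. -/
open scoped MultiplierAlgebra

/-- A unital inverse semigroup: a monoid in which every element `g` has a unique
generalized inverse `g⁻¹` with `g * g⁻¹ * g = g` and `g⁻¹ * g * g⁻¹ = g⁻¹`. -/
class InverseMonoid (G : Type*) extends Monoid G, Inv G where
  mul_inv_mul : ∀ g : G, g * g⁻¹ * g = g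
  inv_mul_inv : ∀ g : G, g⁻¹ * g * g⁻¹ = g⁻¹
  inv_unique : ∀ {g h : G}, g * h * g = g → h * g * h = h → h = g⁻¹

/-- for an `α`-cocycle `u` on a `G`-algebra `(A, α)` one has
`ᾱ_g(u_{g⁻¹}) = u_g*` for every `g ∈ G`. -/
theorem cocycle_alphabar_inv_eq_star
    {G : Type*} [InverseMonoid G] {A : Type*} [NonUnitalCStarAlgebra A]
    -- `(A, α)` is a `G`-algebra:
    (α : G → A →⋆ₙₐ[ℂ] A)
    (hα_one : α 1 = NonUnitalStarAlgHom.id ℂ A)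
    (hα_mul : ∀ g h : G, α (g * h) = (α g).comp (α h))
    (hα_central : ∀ (g : G) (x y : A), α (g * g⁻¹) x * y = x * α (g * g⁻¹) y)
    -- `ᾱ` is the extension of `α` to the multiplier algebra:
    (αbar : G → 𝓜(ℂ, A) → 𝓜(ℂ, A))
    (hαbar_fst : ∀ (g : G) (m : 𝓜(ℂ, A)) (a : A), (αbar g m).fst a = α g (m.fst (α g⁻¹ a)))
    (hαbar_snd : ∀ (g : G) (m : 𝓜(ℂ, A)) (a : A), (αbar g m).snd a = α g (m.snd (α g⁻¹ a)))
    -- `u` is an `α`-cocycle: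
    (u : G → 𝓜(ℂ, A))
    (hu₁ : ∀ (g : G) (a : A), (star (u g) * u g).fst a = α (g * g⁻¹) a)
    (hu₂ : ∀ g : G, u (g * g⁻¹) = u g * star (u g))
    (hu₃ : ∀ g h : G, u (g * h) = u g * αbar g (u h)) :
    ∀ g : G, αbar g (u g⁻¹) = star (u g) := by
  intro g
  -- Semigroup identities for the idempotent `e = g * g⁻¹`.
  have he2 : (g * g⁻¹) * (g * g⁻¹) = g * g⁻¹ := by
    rw [← mul_assoc, InverseMonoid.mul_inv_mul]
  have heinv : (g * g⁻¹)⁻¹ = g * g⁻¹ := by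
    have h : (g * g⁻¹) * (g * g⁻¹) * (g * g⁻¹) = g * g⁻¹ := by rw [he2, he2]
    exact (InverseMonoid.inv_unique h h).symm
  have heg : (g * g⁻¹) * g = g := InverseMonoid.mul_inv_mul g
  have hge : g⁻¹ * (g * g⁻¹) = g⁻¹ := by
    rw [← mul_assoc]; exact InverseMonoid.inv_mul_inv g
  have hcomp : ∀ (s t : G) (x : A), α s (α t x) = α (s * t) x := fun s t x => by
    rw [hα_mul]; rfl
  -- a cancellation principle in a C*-algebra
  have cancel : ∀ x y : A, (∀ b : A, (x - y) * b = 0) → x = y := fun x y h =>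
    sub_eq_zero.mp ((CStarRing.mul_star_self_eq_zero_iff (x - y)).mp (h (star (x - y))))
  -- basic properties of `p = u (g * g⁻¹)`
  have hp1 : u (g * g⁻¹) = u (g * g⁻¹) * star (u (g * g⁻¹)) := by
    have h := hu₂ (g * g⁻¹); rw [heinv, he2] at h; exact h
  have hpstar : star (u (g * g⁻¹)) = u (g * g⁻¹) :=
    calc star (u (g * g⁻¹)) = star (u (g * g⁻¹) * star (u (g * g⁻¹))) := by rw [← hp1]
      _ = u (g * g⁻¹) * star (u (g * g⁻¹)) := by rw [star_mul, star_star]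
      _ = u (g * g⁻¹) := hp1.symm
  have hpp : u (g * g⁻¹) * u (g * g⁻¹) = u (g * g⁻¹) :=
    calc u (g * g⁻¹) * u (g * g⁻¹) = u (g * g⁻¹) * star (u (g * g⁻¹)) := by rw [hpstar]
      _ = u (g * g⁻¹) := hp1.symm
  have hpfst : ∀ a : A, (u (g * g⁻¹)).fst a = α (g * g⁻¹) a := fun a => by
    have h := hu₁ (g * g⁻¹) a
    rw [heinv, he2, hpstar, hpp] at h
    exact h
  have hpsnd : ∀ a : A, (u (g * g⁻¹)).snd a = α (g * g⁻¹) a := fun a => by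
    refine cancel _ _ fun b => ?_
    rw [sub_mul, (u (g * g⁻¹)).central, hpfst, ← hα_central, sub_self]
  -- `star (u g) * u g = u (g * g⁻¹)`
  have hq : star (u g) * u g = u (g * g⁻¹) := by
    have hfst : ∀ a : A, (star (u g) * u g).fst a = (u (g * g⁻¹)).fst a := fun a => by
      rw [hu₁ g a, hpfst]
    have hsnd : ∀ a : A, (star (u g) * u g).snd a = (u (g * g⁻¹)).snd a := fun a => by
      refine cancel _ _ fun b => ?_
      rw [sub_mul, (star (u g) * u g).central, (u (g * g⁻¹)).central, hfst, sub_self]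
    exact DoubleCentralizer.ext _ _ _ _
      (Prod.ext (ContinuousLinearMap.ext hfst) (ContinuousLinearMap.ext hsnd))
  have hvsv : u g * star (u g) = u (g * g⁻¹) := (hu₂ g).symm
  -- auxiliary products
  have k2 : u g * (u (g * g⁻¹) * star (u g)) = u (g * g⁻¹) := by
    conv_lhs => rw [← hq, mul_assoc (star (u g)) (u g) (star (u g)), hvsv, ← mul_assoc, hvsv,
      hpp]
  have k1 : u g * (u (g * g⁻¹) * (u (g * g⁻¹) * star (u g))) = u (g * g⁻¹) := by
    rw [← mul_assoc (u (g * g⁻¹)) (u (g * g⁻¹)), hpp]; exact k2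
  -- `u g * u (g * g⁻¹) = u g`, via the C*-identity
  have hz : (u g * u (g * g⁻¹) - u g) * star (u g * u (g * g⁻¹) - u g) = 0 := by
    rw [star_sub, star_mul, hpstar]
    simp only [sub_mul, mul_sub, mul_assoc]
    rw [k1, k2, hvsv]
    simp
  have hvp : u g * u (g * g⁻¹) = u g :=
    sub_eq_zero.mp ((CStarRing.mul_star_self_eq_zero_iff _).mp hz)
  have hpsv : u (g * g⁻¹) * star (u g) = star (u g) := by
    rw [← hpstar, ← star_mul, hvp]
  have hsvp : star (u g) * u (g * g⁻¹) = star (u g) :=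
    calc star (u g) * u (g * g⁻¹) = star (u g) * (u g * star (u g)) := by rw [hvsv]
      _ = (star (u g) * u g) * star (u g) := by rw [mul_assoc]
      _ = u (g * g⁻¹) * star (u g) := by rw [hq]
      _ = star (u g) := hpsv
  have hvw : u (g * g⁻¹) = u g * αbar g (u g⁻¹) := hu₃ g g⁻¹
  -- `u (g * g⁻¹) * αbar g (u g⁻¹) = αbar g (u g⁻¹)`
  have hpw : u (g * g⁻¹) * αbar g (u g⁻¹) = αbar g (u g⁻¹) := by
    refine DoubleCentralizer.ext _ _ _ _
      (Prod.ext (ContinuousLinearMap.ext fun a => ?_) (ContinuousLinearMap.ext fun a => ?_))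
    · show (u (g * g⁻¹)).fst ((αbar g (u g⁻¹)).fst a) = (αbar g (u g⁻¹)).fst a
      rw [hpfst, hαbar_fst, hcomp, heg]
    · show (αbar g (u g⁻¹)).snd ((u (g * g⁻¹)).snd a) = (αbar g (u g⁻¹)).snd a
      rw [hpsnd, hαbar_snd, hαbar_snd, hcomp, hge]
  calc αbar g (u g⁻¹) = u (g * g⁻¹) * αbar g (u g⁻¹) := hpw.symm
    _ = (star (u g) * u g) * αbar g (u g⁻¹) := by rw [hq]
    _ = star (u g) * (u g * αbar g (u g⁻¹)) := by rw [mul_assoc]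
    _ = star (u g) * u (g * g⁻¹) := by rw [← hvw]
    _ = star (u g) := hsvp
end

section
/- Let G be a unital inverse semigroup, (A, α) a G-algebra, and u : G → M(A) a map satisfying, for all g, h ∈ G, the identities u_g* u_g = α_{g g⁻¹} (as multipliers) and u_{g h} = u_g ᾱ_g(u_h). Then the identity u_{g g⁻¹} = u_g u_g* holds for all g ∈ G if and only if the identity ᾱ_g(u_{g⁻¹}) = u_g* holds for all g ∈ G. (Thus in the definition of an α-cocycle the second identity may be replaced by ᾱ_g(u_{g⁻¹}) = u_g* without changing the definition.) -/
open scoped MultiplierAlgebra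

private lemma dc_ext' {A : Type*} [NonUnitalCStarAlgebra A] {m n : 𝓜(ℂ, A)}
    (h1 : ∀ a, m.fst a = n.fst a) (h2 : ∀ a, m.snd a = n.snd a) : m = n := by
  refine DoubleCentralizer.ext ℂ A _ _ (Prod.ext ?_ ?_) <;>
    exact ContinuousLinearMap.ext (by assumption)

/-- given the first and third cocycle identities, the second identity
`u_{g g⁻¹} = u_g u_g*` holds for all `g` iff `ᾱ_g(u_{g⁻¹}) = u_g*` holds for all `g`. -/
theorem cocycle_second_identity_iff
    {G : Type*} [InverseMonoid G] {A : Type*} [NonUnitalCStarAlgebra A]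
    -- `(A, α)` is a `G`-algebra:
    (α : G → A →⋆ₙₐ[ℂ] A)
    (hα_one : α 1 = NonUnitalStarAlgHom.id ℂ A)
    (hα_mul : ∀ g h : G, α (g * h) = (α g).comp (α h))
    (hα_central : ∀ (g : G) (x y : A), α (g * g⁻¹) x * y = x * α (g * g⁻¹) y)
    -- `ᾱ` is the extension of `α` to the multiplier algebra:
    (αbar : G → 𝓜(ℂ, A) → 𝓜(ℂ, A))
    (hαbar_fst : ∀ (g : G) (m : 𝓜(ℂ, A)) (a : A), (αbar g m).fst a = α g (m.fst (α g⁻¹ a)))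
    (hαbar_snd : ∀ (g : G) (m : 𝓜(ℂ, A)) (a : A), (αbar g m).snd a = α g (m.snd (α g⁻¹ a)))
    -- `u` satisfies the first and third cocycle identities:
    (u : G → 𝓜(ℂ, A))
    (hu₁ : ∀ (g : G) (a : A), (star (u g) * u g).fst a = α (g * g⁻¹) a)
    (hu₃ : ∀ g h : G, u (g * h) = u g * αbar g (u h)) :
    (∀ g : G, u (g * g⁻¹) = u g * star (u g)) ↔ (∀ g : G, αbar g (u g⁻¹) = star (u g)) := by
  constructor
  · intro hu₂ g
    set p : 𝓜(ℂ, A) := star (u g) * u g with hp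
    -- semigroup identities
    have hee : (g * g⁻¹) * (g * g⁻¹) = g * g⁻¹ := by
      rw [← mul_assoc, InverseMonoid.mul_inv_mul]
    have heg : (g * g⁻¹) * g = g := InverseMonoid.mul_inv_mul g
    have hge : g⁻¹ * (g * g⁻¹) = g⁻¹ := by
      rw [← mul_assoc]; exact InverseMonoid.inv_mul_inv g
    -- the second coordinate of p
    have hp_snd : ∀ a, p.snd a = α (g * g⁻¹) a := by
      intro a
      have key : ∀ b, (p.snd a - α (g * g⁻¹) a) * b = 0 := by
        intro b
        rw [sub_mul, p.central a b, hu₁ g b, ← hα_central g a b, sub_self]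
      have := key (star (p.snd a - α (g * g⁻¹) a))
      rw [CStarRing.mul_star_self_eq_zero_iff] at this
      exact sub_eq_zero.mp this
    have hps : star p = p := by rw [hp, star_mul, star_star]
    -- p is idempotent
    have hp2 : p * p = p := by
      refine dc_ext' (fun a => ?_) (fun a => ?_)
      · rw [DoubleCentralizer.mul_fst, ContinuousLinearMap.mul_apply, hu₁, hu₁,
          ← NonUnitalStarAlgHom.comp_apply, ← hα_mul, hee]
      · rw [DoubleCentralizer.mul_snd, ContinuousLinearMap.mul_apply, hp_snd, hp_snd,
          ← NonUnitalStarAlgHom.comp_apply, ← hα_mul, hee]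
    -- u g * p = u g
    have h1 : u g * p = u g := by
      have hz : star (u g * p - u g) * (u g * p - u g) = 0 := by
        rw [star_sub, star_mul, hps]
        have expand : (p * star (u g) - star (u g)) * (u g * p - u g)
            = p * (star (u g) * u g) * p - p * (star (u g) * u g)
              - star (u g) * u g * p + star (u g) * u g := by noncomm_ring
        rw [expand, ← hp]
        simp only [hp2]
        abel
      exact sub_eq_zero.mp (CStarRing.star_mul_self_eq_zero_iff _ |>.mp hz)
    -- p * star (u g) = star (u g)
    have h1' : p * star (u g) = star (u g) := by
      have h2 := congrArg star h1
      rwa [star_mul, hps] at h2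
    -- p * v = v
    have hpv : p * αbar g (u g⁻¹) = αbar g (u g⁻¹) := by
      refine dc_ext' (fun a => ?_) (fun a => ?_)
      · rw [DoubleCentralizer.mul_fst, ContinuousLinearMap.mul_apply, hu₁, hαbar_fst,
          ← NonUnitalStarAlgHom.comp_apply, ← hα_mul, heg]
      · rw [DoubleCentralizer.mul_snd, ContinuousLinearMap.mul_apply, hp_snd, hαbar_snd,
          hαbar_snd, ← NonUnitalStarAlgHom.comp_apply, ← hα_mul, hge]
    have key : u g * αbar g (u g⁻¹) = u g * star (u g) := (hu₃ g g⁻¹).symm.trans (hu₂ g)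
    calc αbar g (u g⁻¹) = p * αbar g (u g⁻¹) := hpv.symm
      _ = star (u g) * (u g * αbar g (u g⁻¹)) := by rw [hp, mul_assoc]
      _ = star (u g) * (u g * star (u g)) := by rw [key]
      _ = p * star (u g) := by rw [hp, mul_assoc]
      _ = star (u g) := h1'
  · intro h g
    rw [hu₃ g g⁻¹, h g]
end

section
/- Let G be a unital inverse semigroup and (A, α) a G-algebra. Then: (i) for every g ∈ G and m ∈ M(A), the pair of maps L(a) = α_g(m α_{g⁻¹}(a)) and R(a) = α_g(α_{g⁻¹}(a) m) on A is a double centralizer (i.e. R(a) b = a L(b) for all a, b ∈ A), so it defines a multiplier ᾱ_g(m) ∈ M(A); (ii) the resulting map ᾱ : G → End(M(A)) is a unital semigroup homomorphism whose values are *-endomorphisms of M(A); and (iii) ᾱ_{g g⁻¹}(m) n = m ᾱ_{g g⁻¹}(n) for all m, n ∈ M(A) and g ∈ G. Hence (M(A), ᾱ) is again a G-algebra. -/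
open scoped MultiplierAlgebra

section InverseMonoidLemmas

variable {G : Type*} [InverseMonoid G]

open InverseMonoid

theorem IM_inv_inv (g : G) : g⁻¹⁻¹ = g :=
  (inv_unique (inv_mul_inv g) (mul_inv_mul g)).symm

theorem IM_idem_inv {e : G} (he : e * e = e) : e⁻¹ = e :=
  (inv_unique (by rw [he, he]) (by rw [he, he])).symm

theorem IM_one_inv : (1 : G)⁻¹ = 1 := IM_idem_inv (one_mul 1)

theorem IM_prod_idem {e f : G} (he : e * e = e) (hf : f * f = f) :
    (e * f) * (e * f) = e * f := by
  have c1 : (e * f) * (f * ((e * f)⁻¹ * e)) * (e * f) = e * f := by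
    have h : (e * f) * (f * ((e * f)⁻¹ * e)) * (e * f)
        = (e * (f * f)) * ((e * f)⁻¹ * ((e * e) * f)) := by
      simp only [mul_assoc]
    rw [h, he, hf, ← mul_assoc (e * f) ((e * f)⁻¹) (e * f)]
    exact mul_inv_mul (e * f)
  have c2 : (f * ((e * f)⁻¹ * e)) * (e * f) * (f * ((e * f)⁻¹ * e)) = f * ((e * f)⁻¹ * e) := by
    have h : (f * ((e * f)⁻¹ * e)) * (e * f) * (f * ((e * f)⁻¹ * e))
        = f * (((e * f)⁻¹ * ((e * e) * ((f * f) * (e * f)⁻¹))) * e) := by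
      simp only [mul_assoc]
    rw [h, he, hf]
    have h2 : (e * f)⁻¹ * (e * (f * (e * f)⁻¹)) = (e * f)⁻¹ * (e * f) * (e * f)⁻¹ := by
      simp only [mul_assoc]
    rw [h2, inv_mul_inv]
  have h1 : f * ((e * f)⁻¹ * e) = (e * f)⁻¹ := inv_unique c1 c2
  have hxx : (e * f)⁻¹ * (e * f)⁻¹ = (e * f)⁻¹ := by
    conv_lhs => rw [← h1]
    have h : (f * ((e * f)⁻¹ * e)) * (f * ((e * f)⁻¹ * e))
        = f * (((e * f)⁻¹ * (e * (f * (e * f)⁻¹))) * e) := by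
      simp only [mul_assoc]
    rw [h]
    have h2 : (e * f)⁻¹ * (e * (f * (e * f)⁻¹)) = (e * f)⁻¹ * (e * f) * (e * f)⁻¹ := by
      simp only [mul_assoc]
    rw [h2, inv_mul_inv]
    exact h1
  have hinv : (e * f)⁻¹ = e * f := by
    have h := IM_idem_inv hxx
    rw [IM_inv_inv] at h
    exact h.symm
  calc (e * f) * (e * f) = (e * f)⁻¹ * (e * f)⁻¹ := by rw [hinv]
    _ = (e * f)⁻¹ := hxx
    _ = e * f := hinv

theorem IM_idem_comm {e f : G} (he : e * e = e) (hf : f * f = f) : e * f = f * e := by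
  have hef := IM_prod_idem he hf
  have hfe := IM_prod_idem hf he
  have c1 : (e * f) * (f * e) * (e * f) = e * f := by
    have h : (e * f) * (f * e) * (e * f) = (e * (f * f)) * ((e * e) * f) := by
      simp only [mul_assoc]
    rw [h, he, hf]; exact hef
  have c2 : (f * e) * (e * f) * (f * e) = f * e := by
    have h : (f * e) * (e * f) * (f * e) = (f * (e * e)) * ((f * f) * e) := by
      simp only [mul_assoc]
    rw [h, he, hf]; exact hfe
  have h := inv_unique c1 c2
  rw [IM_idem_inv hef] at h
  exact h.symm

theorem IM_he (g : G) : (g * g⁻¹) * (g * g⁻¹) = g * g⁻¹ := by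
  have h : (g * g⁻¹) * (g * g⁻¹) = g * (g⁻¹ * g * g⁻¹) := by simp only [mul_assoc]
  rw [h, inv_mul_inv]

theorem IM_hf (g : G) : (g⁻¹ * g) * (g⁻¹ * g) = g⁻¹ * g := by
  have h : (g⁻¹ * g) * (g⁻¹ * g) = (g⁻¹ * g * g⁻¹) * g := by simp only [mul_assoc]
  rw [h, inv_mul_inv]

theorem IM_mul_inv_rev (g h : G) : (g * h)⁻¹ = h⁻¹ * g⁻¹ := by
  have comm := IM_idem_comm (IM_he h) (IM_hf g)
  have c1 : (g * h) * (h⁻¹ * g⁻¹) * (g * h) = g * h := by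
    have h1 : (g * h) * (h⁻¹ * g⁻¹) * (g * h) = g * ((h * h⁻¹) * (g⁻¹ * g) * h) := by
      simp only [mul_assoc]
    rw [h1, comm]
    have h2 : g * ((g⁻¹ * g) * (h * h⁻¹) * h) = (g * g⁻¹ * g) * (h * h⁻¹ * h) := by
      simp only [mul_assoc]
    rw [h2, mul_inv_mul, mul_inv_mul]
  have c2 : (h⁻¹ * g⁻¹) * (g * h) * (h⁻¹ * g⁻¹) = h⁻¹ * g⁻¹ := by
    have h1 : (h⁻¹ * g⁻¹) * (g * h) * (h⁻¹ * g⁻¹) = h⁻¹ * ((g⁻¹ * g) * (h * h⁻¹) * g⁻¹) := by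
      simp only [mul_assoc]
    rw [h1, ← comm]
    have h2 : h⁻¹ * ((h * h⁻¹) * (g⁻¹ * g) * g⁻¹) = (h⁻¹ * h * h⁻¹) * (g⁻¹ * g * g⁻¹) := by
      simp only [mul_assoc]
    rw [h2, inv_mul_inv, inv_mul_inv]
  exact (inv_unique c1 c2).symm

end InverseMonoidLemmas

section MultiplierAux

variable {A : Type*} [NonUnitalCStarAlgebra A]

theorem MG_rcancel {x y : A} (h : ∀ b, x * b = y * b) : x = y := by
  have h2 : (x - y) * star (x - y) = 0 := by rw [sub_mul, h (star (x - y)), sub_self]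
  rw [CStarRing.mul_star_self_eq_zero_iff] at h2
  exact sub_eq_zero.mp h2

theorem MG_lcancel {x y : A} (h : ∀ b, b * x = b * y) : x = y := by
  have h2 : star (x - y) * (x - y) = 0 := by rw [mul_sub, h (star (x - y)), sub_self]
  rw [CStarRing.star_mul_self_eq_zero_iff] at h2
  exact sub_eq_zero.mp h2

theorem MG_fst_mul (m : 𝓜(ℂ, A)) (a b : A) : m.fst (a * b) = m.fst a * b := by
  apply MG_lcancel; intro c
  calc c * m.fst (a * b) = m.snd c * (a * b) := (m.central c (a * b)).symm
    _ = m.snd c * a * b := (mul_assoc _ _ _).symm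
    _ = c * m.fst a * b := by rw [m.central]
    _ = c * (m.fst a * b) := mul_assoc _ _ _

theorem MG_snd_mul (m : 𝓜(ℂ, A)) (a b : A) : m.snd (a * b) = a * m.snd b := by
  apply MG_rcancel; intro c
  calc m.snd (a * b) * c = a * b * m.fst c := m.central _ _
    _ = a * (b * m.fst c) := mul_assoc _ _ _
    _ = a * (m.snd b * c) := by rw [m.central]
    _ = a * m.snd b * c := (mul_assoc _ _ _).symm

/-- A star homomorphism of C*-algebras as a continuous linear map. -/
noncomputable def MG_clm (φ : A →⋆ₙₐ[ℂ] A) : A →L[ℂ] A where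
  toFun := φ
  map_add' := map_add φ
  map_smul' := fun c x => map_smul φ c x
  cont := AddMonoidHomClass.continuous_of_bound φ 1 fun a => by
    simpa only [one_mul] using NonUnitalStarAlgHom.norm_apply_le φ a

@[simp] theorem MG_clm_apply (φ : A →⋆ₙₐ[ℂ] A) (a : A) : MG_clm φ a = φ a := rfl

variable {G : Type*} [InverseMonoid G]

/-- The extended action on the multiplier algebra. -/
noncomputable def MG_abar (α : G → A →⋆ₙₐ[ℂ] A)
    (hc : ∀ (g : G) (m : 𝓜(ℂ, A)) (a b : A),
      α g (m.snd (α g⁻¹ a)) * b = a * α g (m.fst (α g⁻¹ b)))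
    (g : G) (m : 𝓜(ℂ, A)) : 𝓜(ℂ, A) where
  toProd := ((MG_clm (α g)).comp (m.fst.comp (MG_clm (α g⁻¹))),
             (MG_clm (α g)).comp (m.snd.comp (MG_clm (α g⁻¹))))
  central := fun x y => hc g m x y

@[simp] theorem MG_abar_fst (α : G → A →⋆ₙₐ[ℂ] A)
    (hc : ∀ (g : G) (m : 𝓜(ℂ, A)) (a b : A),
      α g (m.snd (α g⁻¹ a)) * b = a * α g (m.fst (α g⁻¹ b)))
    (g : G) (m : 𝓜(ℂ, A)) (a : A) :
    (MG_abar α hc g m).fst a = α g (m.fst (α g⁻¹ a)) := rfl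

@[simp] theorem MG_abar_snd (α : G → A →⋆ₙₐ[ℂ] A)
    (hc : ∀ (g : G) (m : 𝓜(ℂ, A)) (a b : A),
      α g (m.snd (α g⁻¹ a)) * b = a * α g (m.fst (α g⁻¹ b)))
    (g : G) (m : 𝓜(ℂ, A)) (a : A) :
    (MG_abar α hc g m).snd a = α g (m.snd (α g⁻¹ a)) := rfl

theorem MG_ext (x y : 𝓜(ℂ, A)) (h1 : ∀ a, x.fst a = y.fst a) (h2 : ∀ a, x.snd a = y.snd a) :
    x = y :=
  DoubleCentralizer.ext ℂ A x y
    (Prod.ext (ContinuousLinearMap.ext h1) (ContinuousLinearMap.ext h2))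

end MultiplierAux

/-- the action `α` of `G` on a `G`-algebra `A` extends to an action `ᾱ` of `G` on
the multiplier algebra `M(A)`, making `(M(A), ᾱ)` a `G`-algebra: (i) the pair of maps
`L(a) = α_g(m α_{g⁻¹}(a))`, `R(a) = α_g(α_{g⁻¹}(a) m)` is a double centralizer, hence defines a
multiplier `ᾱ_g(m)`; (ii) `ᾱ : G → End(M(A))` is a unital semigroup homomorphism by
`*`-endomorphisms; (iii) `ᾱ_{g g⁻¹}(m) n = m ᾱ_{g g⁻¹}(n)`. -/
theorem multiplier_algebra_is_G_algebra
    {G : Type*} [InverseMonoid G] {A : Type*} [NonUnitalCStarAlgebra A]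
    -- `(A, α)` is a `G`-algebra:
    (α : G → A →⋆ₙₐ[ℂ] A)
    (hα_one : α 1 = NonUnitalStarAlgHom.id ℂ A)
    (hα_mul : ∀ g h : G, α (g * h) = (α g).comp (α h))
    (hα_central : ∀ (g : G) (x y : A), α (g * g⁻¹) x * y = x * α (g * g⁻¹) y) :
    -- (i) the centrality condition `R(a) b = a L(b)` of a double centralizer:
    (∀ (g : G) (m : 𝓜(ℂ, A)) (a b : A),
        α g (m.snd (α g⁻¹ a)) * b = a * α g (m.fst (α g⁻¹ b))) ∧
    -- it defines a multiplier `ᾱ_g(m)`, and `ᾱ` makes `M(A)` a `G`-algebra: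
    ∃ αbar : G → 𝓜(ℂ, A) → 𝓜(ℂ, A),
      (∀ (g : G) (m : 𝓜(ℂ, A)) (a : A), (αbar g m).fst a = α g (m.fst (α g⁻¹ a))) ∧
      (∀ (g : G) (m : 𝓜(ℂ, A)) (a : A), (αbar g m).snd a = α g (m.snd (α g⁻¹ a))) ∧
      -- (ii) `ᾱ` is a unital semigroup homomorphism ...
      (∀ m : 𝓜(ℂ, A), αbar 1 m = m) ∧
      (∀ (g h : G) (m : 𝓜(ℂ, A)), αbar (g * h) m = αbar g (αbar h m)) ∧
      -- ... whose values are `*`-endomorphisms of `M(A)`: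
      (∀ (g : G) (m n : 𝓜(ℂ, A)), αbar g (m + n) = αbar g m + αbar g n) ∧
      (∀ (g : G) (m n : 𝓜(ℂ, A)), αbar g (m * n) = αbar g m * αbar g n) ∧
      (∀ (g : G) (c : ℂ) (m : 𝓜(ℂ, A)), αbar g (c • m) = c • αbar g m) ∧
      (∀ (g : G) (m : 𝓜(ℂ, A)), αbar g (star m) = star (αbar g m)) ∧
      -- (iii) the centrality axiom of a `G`-algebra:
      (∀ (g : G) (m n : 𝓜(ℂ, A)), αbar (g * g⁻¹) m * n = m * αbar (g * g⁻¹) n) := by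
  have happ : ∀ (g h : G) (x : A), α (g * h) x = α g (α h x) := fun g h x => by
    rw [hα_mul]; rfl
  have hcenf : ∀ (g : G) (x y : A), α (g⁻¹ * g) x * y = x * α (g⁻¹ * g) y := fun g x y => by
    have h := hα_central g⁻¹ x y; rwa [IM_inv_inv] at h
  have lemA : ∀ (g : G) (x b : A), α g x * b = α g (x * α g⁻¹ b) := by
    intro g x b
    have h1 : α g x = α (g * g⁻¹) (α g x) := by
      rw [← happ, InverseMonoid.mul_inv_mul]
    calc α g x * b = α (g * g⁻¹) (α g x) * b := by rw [← h1]
      _ = α g x * α (g * g⁻¹) b := hα_central g (α g x) b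
      _ = α g x * α g (α g⁻¹ b) := by rw [happ]
      _ = α g (x * α g⁻¹ b) := (map_mul (α g) _ _).symm
  have lemB : ∀ (g : G) (a y : A), a * α g y = α g (α g⁻¹ a * y) := by
    intro g a y
    have h1 : α g y = α (g * g⁻¹) (α g y) := by
      rw [← happ, InverseMonoid.mul_inv_mul]
    calc a * α g y = a * α (g * g⁻¹) (α g y) := by rw [← h1]
      _ = α (g * g⁻¹) a * α g y := (hα_central g a (α g y)).symm
      _ = α g (α g⁻¹ a) * α g y := by rw [happ]
      _ = α g (α g⁻¹ a * y) := (map_mul (α g) _ _).symm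
  have part1 : ∀ (g : G) (m : 𝓜(ℂ, A)) (a b : A),
      α g (m.snd (α g⁻¹ a)) * b = a * α g (m.fst (α g⁻¹ b)) := by
    intro g m a b
    calc α g (m.snd (α g⁻¹ a)) * b = α g (m.snd (α g⁻¹ a) * α g⁻¹ b) := lemA g _ b
      _ = α g (α g⁻¹ a * m.fst (α g⁻¹ b)) := by rw [m.central]
      _ = a * α g (m.fst (α g⁻¹ b)) := (lemB g a _).symm
  have keyE_fst : ∀ (e : G), e * e = e → (∀ x y : A, α e x * y = x * α e y) →
      ∀ (m : 𝓜(ℂ, A)) (u : A), α e (m.fst (α e u)) = α e (m.fst u) := by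
    intro e he hcen m u
    have hee : ∀ v : A, α e (α e v) = α e v := fun v => by rw [← happ, he]
    apply MG_rcancel; intro b
    calc α e (m.fst (α e u)) * b = m.fst (α e u) * α e b := hcen _ b
      _ = m.fst (α e u * α e b) := (MG_fst_mul m _ _).symm
      _ = m.fst (u * α e b) := by rw [hcen u (α e b), hee]
      _ = m.fst u * α e b := MG_fst_mul m _ _
      _ = α e (m.fst u) * b := (hcen _ b).symm
  have keyE_snd : ∀ (e : G), e * e = e → (∀ x y : A, α e x * y = x * α e y) →
      ∀ (m : 𝓜(ℂ, A)) (u : A), α e (m.snd (α e u)) = α e (m.snd u) := by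
    intro e he hcen m u
    have hee : ∀ v : A, α e (α e v) = α e v := fun v => by rw [← happ, he]
    apply MG_lcancel; intro b
    calc b * α e (m.snd (α e u))
        = α e b * m.snd (α e u) := (hcen b _).symm
      _ = m.snd (α e b * α e u) := (MG_snd_mul m _ _).symm
      _ = m.snd (b * α e u) := by rw [hcen b (α e u), hee]
      _ = m.snd (α e b * u) := by rw [hcen b u]
      _ = α e b * m.snd u := MG_snd_mul m _ _
      _ = b * α e (m.snd u) := hcen b _
  have keyg_fst : ∀ (g : G) (m : 𝓜(ℂ, A)) (u : A),
      α g (m.fst (α (g⁻¹ * g) u)) = α g (m.fst u) := by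
    intro g m u
    have habs : ∀ v : A, α g (α (g⁻¹ * g) v) = α g v := fun v => by
      rw [← happ, show g * (g⁻¹ * g) = g from by rw [← mul_assoc, InverseMonoid.mul_inv_mul]]
    rw [← habs (m.fst (α (g⁻¹ * g) u)), keyE_fst (g⁻¹ * g) (IM_hf g) (hcenf g) m u, habs]
  have keyg_snd : ∀ (g : G) (m : 𝓜(ℂ, A)) (u : A),
      α g (m.snd (α (g⁻¹ * g) u)) = α g (m.snd u) := by
    intro g m u
    have habs : ∀ v : A, α g (α (g⁻¹ * g) v) = α g v := fun v => by
      rw [← happ, show g * (g⁻¹ * g) = g from by rw [← mul_assoc, InverseMonoid.mul_inv_mul]]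
    rw [← habs (m.snd (α (g⁻¹ * g) u)), keyE_snd (g⁻¹ * g) (IM_hf g) (hcenf g) m u, habs]
  refine ⟨part1, MG_abar α part1, fun g m a => rfl, fun g m a => rfl, ?_, ?_, ?_, ?_, ?_, ?_, ?_⟩
  · -- unitality
    intro m
    refine MG_ext _ _ (fun a => ?_) (fun a => ?_) <;>
      simp [MG_abar_fst, MG_abar_snd, IM_one_inv, hα_one]
  · -- multiplicativity in `G`
    intro g h m
    refine MG_ext _ _ (fun a => ?_) (fun a => ?_) <;>
      simp only [MG_abar_fst, MG_abar_snd, IM_mul_inv_rev, happ]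
  · -- additivity
    intro g m n
    refine MG_ext _ _ (fun a => ?_) (fun a => ?_) <;>
      simp only [MG_abar_fst, MG_abar_snd, DoubleCentralizer.add_fst, DoubleCentralizer.add_snd,
        ContinuousLinearMap.add_apply, map_add]
  · -- multiplicativity on `M(A)`
    intro g m n
    refine MG_ext _ _ (fun a => ?_) (fun a => ?_)
    · simp only [MG_abar_fst, DoubleCentralizer.mul_fst, ContinuousLinearMap.mul_apply]
      rw [← happ g⁻¹ g, keyg_fst]
    · simp only [MG_abar_snd, DoubleCentralizer.mul_snd, ContinuousLinearMap.mul_apply]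
      rw [← happ g⁻¹ g, keyg_snd]
  · -- scalar multiplication
    intro g c m
    refine MG_ext _ _ (fun a => ?_) (fun a => ?_) <;>
      simp only [MG_abar_fst, MG_abar_snd, DoubleCentralizer.smul_fst, DoubleCentralizer.smul_snd,
        ContinuousLinearMap.smul_apply, map_smul]
  · -- star
    intro g m
    refine MG_ext _ _ (fun a => ?_) (fun a => ?_) <;>
      simp only [MG_abar_fst, MG_abar_snd, DoubleCentralizer.star_fst, DoubleCentralizer.star_snd,
        map_star]
  · -- centrality
    intro g m n
    have hcen := hα_central g
    have hee : ∀ v : A, α (g * g⁻¹) (α (g * g⁻¹) v) = α (g * g⁻¹) v := fun v => by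
      rw [← happ, IM_he]
    refine MG_ext _ _ (fun a => ?_) (fun a => ?_)
    · simp only [DoubleCentralizer.mul_fst, ContinuousLinearMap.mul_apply, MG_abar_fst,
        IM_idem_inv (IM_he g)]
      apply MG_rcancel; intro b
      have hL : α (g * g⁻¹) (m.fst (α (g * g⁻¹) (n.fst a))) * b
          = m.fst (n.fst a) * α (g * g⁻¹) b := by
        calc α (g * g⁻¹) (m.fst (α (g * g⁻¹) (n.fst a))) * b
            = m.fst (α (g * g⁻¹) (n.fst a)) * α (g * g⁻¹) b := hcen _ b
          _ = m.fst (α (g * g⁻¹) (n.fst a) * α (g * g⁻¹) b) := (MG_fst_mul m _ _).symm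
          _ = m.fst (n.fst a * α (g * g⁻¹) b) := by
              rw [hcen (n.fst a) (α (g * g⁻¹) b), hee]
          _ = m.fst (n.fst a) * α (g * g⁻¹) b := MG_fst_mul m _ _
      have hR : m.fst (α (g * g⁻¹) (n.fst (α (g * g⁻¹) a))) * b
          = m.fst (n.fst a) * α (g * g⁻¹) b := by
        calc m.fst (α (g * g⁻¹) (n.fst (α (g * g⁻¹) a))) * b
            = m.fst (α (g * g⁻¹) (n.fst (α (g * g⁻¹) a)) * b) := (MG_fst_mul m _ _).symm
          _ = m.fst (n.fst (α (g * g⁻¹) a) * α (g * g⁻¹) b) := by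
              rw [hcen (n.fst (α (g * g⁻¹) a)) b]
          _ = m.fst (n.fst (α (g * g⁻¹) a) * α (g * g⁻¹) b) := rfl
          _ = m.fst (n.fst (α (g * g⁻¹) a * α (g * g⁻¹) b)) := by rw [MG_fst_mul n]
          _ = m.fst (n.fst (a * α (g * g⁻¹) b)) := by rw [hcen a (α (g * g⁻¹) b), hee]
          _ = m.fst (n.fst a * α (g * g⁻¹) b) := by rw [MG_fst_mul n]
          _ = m.fst (n.fst a) * α (g * g⁻¹) b := MG_fst_mul m _ _
      rw [hL, hR]
    · simp only [DoubleCentralizer.mul_snd, ContinuousLinearMap.mul_apply, MG_abar_snd,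
        IM_idem_inv (IM_he g)]
      apply MG_lcancel; intro b
      have k1 := keyE_snd (g * g⁻¹) (IM_he g) hcen (m * n) a
      simp only [DoubleCentralizer.mul_snd, ContinuousLinearMap.mul_apply] at k1
      have k2 := keyE_snd (g * g⁻¹) (IM_he g) hcen n (m.snd a)
      calc b * n.snd (α (g * g⁻¹) (m.snd (α (g * g⁻¹) a)))
          = n.snd (b * α (g * g⁻¹) (m.snd (α (g * g⁻¹) a))) := (MG_snd_mul n _ _).symm
        _ = n.snd (α (g * g⁻¹) b * m.snd (α (g * g⁻¹) a)) := by
            rw [hcen b (m.snd (α (g * g⁻¹) a))]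
        _ = α (g * g⁻¹) b * n.snd (m.snd (α (g * g⁻¹) a)) := MG_snd_mul n _ _
        _ = b * α (g * g⁻¹) (n.snd (m.snd (α (g * g⁻¹) a))) := hcen b _
        _ = b * α (g * g⁻¹) (n.snd (m.snd a)) := by rw [k1]
        _ = b * α (g * g⁻¹) (n.snd (α (g * g⁻¹) (m.snd a))) := by rw [k2]
end

section
/- Let G be a unital inverse semigroup, (B, β) a G-algebra, and U a G-Hilbert-module action on B regarded as a Hilbert module over itself. Then U_e = β_e for every idempotent element e ∈ G (e² = e). -/
open scoped MultiplierAlgebra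

/-- a `G`-Hilbert-module action `U` on `B`, regarded as a Hilbert module over
itself, satisfies `U_e = β_e` for every idempotent `e ∈ G`. -/
theorem hilbert_action_idempotent
    {G : Type*} [InverseMonoid G] {B : Type*} [NonUnitalCStarAlgebra B]
    -- `(B, β)` is a `G`-algebra:
    (β : G → B →⋆ₙₐ[ℂ] B)
    (hβ_one : β 1 = NonUnitalStarAlgHom.id ℂ B)
    (hβ_mul : ∀ g h : G, β (g * h) = (β g).comp (β h))
    (hβ_central : ∀ (g : G) (x y : B), β (g * g⁻¹) x * y = x * β (g * g⁻¹) y)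
    -- `U` is a `G`-Hilbert-module action on `B`, regarded as a Hilbert module over
    -- itself via `⟨a, b⟩ = a* b`:
    (U : G → B →ₗ[ℂ] B)
    (hU_one : U 1 = LinearMap.id)
    (hU_mul : ∀ g h : G, U (g * h) = (U g) ∘ₗ (U h))
    (hU_inner : ∀ (g : G) (ξ η : B), star (U g ξ) * U g η = β g (star ξ * η))
    (hU_mod : ∀ (g : G) (ξ b : B), U g (ξ * b) = U g ξ * β g b)
    (hU_proj : ∀ (g : G) (ξ b : B), U (g * g⁻¹) ξ * b = ξ * β (g * g⁻¹) b)
    : ∀ e : G, e * e = e → ∀ b : B, U e b = β e b := by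
  intro e he b
  have hinv : e⁻¹ = e := (InverseMonoid.inv_unique (g := e) (h := e) (by rw [he, he]) (by rw [he, he])).symm
  have hee : e * e⁻¹ = e := by rw [hinv, he]
  have key : ∀ c : B, (U e b - β e b) * c = 0 := by
    intro c
    have h1 := hU_proj e b c
    rw [hee] at h1
    have h3 : β e b * c = b * β e c := by
      have := hβ_central e b c; rwa [hee] at this
    rw [sub_mul, h1, h3, sub_self]
  have h := key (star (U e b - β e b))
  rwa [CStarRing.mul_star_self_eq_zero_iff, sub_eq_zero] at h
end

section
/- Let G be a unital inverse semigroup, (B, β) a G-algebra, and U a G-Hilbert-module action on B regarded as a Hilbert module over itself. Then for all g ∈ G and x, y ∈ B: (U_g(β_{g⁻¹}(x)))* y = x* β_g(U_{g⁻¹}(y)). In other words, the map u_g := U_g ∘ β_{g⁻¹} : B → B is adjointable with adjoint u_g* = β_g ∘ U_{g⁻¹}. -/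
open scoped MultiplierAlgebra

/-- for a `G`-Hilbert-module action `U` on `B` over itself, the map
`u_g := U_g ∘ β_{g⁻¹}` is adjointable with adjoint `u_g* = β_g ∘ U_{g⁻¹}`:
`(U_g(β_{g⁻¹}(x)))* y = x* β_g(U_{g⁻¹}(y))`. -/
theorem hilbert_action_adjoint
    {G : Type*} [InverseMonoid G] {B : Type*} [NonUnitalCStarAlgebra B]
    -- `(B, β)` is a `G`-algebra:
    (β : G → B →⋆ₙₐ[ℂ] B)
    (hβ_one : β 1 = NonUnitalStarAlgHom.id ℂ B)
    (hβ_mul : ∀ g h : G, β (g * h) = (β g).comp (β h))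
    (hβ_central : ∀ (g : G) (x y : B), β (g * g⁻¹) x * y = x * β (g * g⁻¹) y)
    -- `U` is a `G`-Hilbert-module action on `B`, regarded as a Hilbert module over
    -- itself via `⟨a, b⟩ = a* b`:
    (U : G → B →ₗ[ℂ] B)
    (hU_one : U 1 = LinearMap.id)
    (hU_mul : ∀ g h : G, U (g * h) = (U g) ∘ₗ (U h))
    (hU_inner : ∀ (g : G) (ξ η : B), star (U g ξ) * U g η = β g (star ξ * η))
    (hU_mod : ∀ (g : G) (ξ b : B), U g (ξ * b) = U g ξ * β g b)
    (hU_proj : ∀ (g : G) (ξ b : B), U (g * g⁻¹) ξ * b = ξ * β (g * g⁻¹) b)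
    : ∀ (g : G) (x y : B), star (U g (β g⁻¹ x)) * y = star x * β g (U g⁻¹ y) := by
  intro g x y
  -- Cancellation: right multiplication detects elements in a C*-algebra.
  have cancel : ∀ a a' : B, (∀ b : B, a * b = a' * b) → a = a' := by
    intro a a' h
    have h2 : (a - a') * star (a - a') = 0 := by
      rw [sub_mul, h (star (a - a')), sub_self]
    have h3 : ‖a - a'‖ * ‖a - a'‖ = 0 := by
      rw [← CStarRing.norm_self_mul_star, h2, norm_zero]
    have h4 : a - a' = 0 := norm_eq_zero.mp (mul_self_eq_zero.mp h3)
    exact sub_eq_zero.mp h4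
  -- basic inverse-monoid identities
  have hgig : g * g⁻¹ * g = g := InverseMonoid.mul_inv_mul g
  have higi : g⁻¹ * g * g⁻¹ = g⁻¹ := InverseMonoid.inv_mul_inv g
  have hgf : g * (g⁻¹ * g) = g := by rw [← mul_assoc]; exact hgig
  -- pointwise multiplicativity facts for U
  have hUg_eq : ∀ z : B, U g z = U (g * g⁻¹) (U g z) := by
    intro z
    conv_lhs => rw [← hgig]
    rw [hU_mul]; rfl
  have hUfc : U g⁻¹ (U g (β g⁻¹ x)) = U (g⁻¹ * g) (β g⁻¹ x) := by
    rw [hU_mul]; rfl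
  have hUfi : U g⁻¹ y = U (g⁻¹ * g) (U g⁻¹ y) := by
    conv_lhs => rw [← higi]
    rw [hU_mul]; rfl
  -- L1 : U g ζ is β_{g g⁻¹}-invariant
  have hbeUg : ∀ z : B, β (g * g⁻¹) (U g z) = U g z := by
    intro z
    apply cancel
    intro b
    rw [hβ_central g (U g z) b, ← hU_proj g (U g z) b, ← hUg_eq z]
  -- Step 1: apply β_{g⁻¹} to the LHS
  have h1 : β g⁻¹ (star (U g (β g⁻¹ x)) * y)
      = β (g⁻¹ * g) (star (β g⁻¹ x) * U g⁻¹ y) := by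
    calc β g⁻¹ (star (U g (β g⁻¹ x)) * y)
        = star (U g⁻¹ (U g (β g⁻¹ x))) * U g⁻¹ y := (hU_inner g⁻¹ _ _).symm
      _ = star (U (g⁻¹ * g) (β g⁻¹ x)) * U (g⁻¹ * g) (U g⁻¹ y) := by
          rw [hUfc]; conv_lhs => rw [hUfi]
      _ = β (g⁻¹ * g) (star (β g⁻¹ x) * U g⁻¹ y) := hU_inner (g⁻¹ * g) _ _
  -- Step 2: apply β_g on top, using β_e = β_g ∘ β_{g⁻¹} and g·(g⁻¹g) = g
  have h2 : β (g * g⁻¹) (star (U g (β g⁻¹ x)) * y)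
      = β g (star (β g⁻¹ x) * U g⁻¹ y) := by
    have e1 : β (g * g⁻¹) (star (U g (β g⁻¹ x)) * y)
        = β g (β g⁻¹ (star (U g (β g⁻¹ x)) * y)) := by
      rw [hβ_mul g g⁻¹]; rfl
    have e2 : β g (β (g⁻¹ * g) (star (β g⁻¹ x) * U g⁻¹ y))
        = β (g * (g⁻¹ * g)) (star (β g⁻¹ x) * U g⁻¹ y) := by
      rw [hβ_mul g (g⁻¹ * g)]; rfl
    rw [e1, h1, e2, hgf]
  -- Step 3: simplify the right-hand side of h2
  have h3 : β g (star (β g⁻¹ x) * U g⁻¹ y) = star x * β g (U g⁻¹ y) := by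
    have e1 : β g (star (β g⁻¹ x) * U g⁻¹ y)
        = β (g * g⁻¹) (star x) * β g (U g⁻¹ y) := by
      rw [map_mul]
      congr 1
      rw [← map_star (β g⁻¹) x, hβ_mul g g⁻¹]; rfl
    have e2 : β (g * g⁻¹) (β g (U g⁻¹ y)) = β g (U g⁻¹ y) := by
      have : β (g * g⁻¹) (β g (U g⁻¹ y)) = β (g * g⁻¹ * g) (U g⁻¹ y) := by
        rw [hβ_mul (g * g⁻¹) g]; rfl
      rw [this, hgig]
    rw [e1, hβ_central g (star x) (β g (U g⁻¹ y)), e2]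
  -- Step 4: the LHS is β_{g g⁻¹}-invariant
  have hs : β (g * g⁻¹) (star (U g (β g⁻¹ x))) = star (U g (β g⁻¹ x)) := by
    rw [map_star, hbeUg]
  have h4 : star (U g (β g⁻¹ x)) * y
      = β (g * g⁻¹) (star (U g (β g⁻¹ x)) * y) := by
    calc star (U g (β g⁻¹ x)) * y
        = β (g * g⁻¹) (star (U g (β g⁻¹ x))) * y := by rw [hs]
      _ = star (U g (β g⁻¹ x)) * β (g * g⁻¹) y := hβ_central g _ y
      _ = β (g * g⁻¹) (star (U g (β g⁻¹ x))) * β (g * g⁻¹) y := by rw [hs]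
      _ = β (g * g⁻¹) (star (U g (β g⁻¹ x)) * y) := (map_mul _ _ _).symm
  rw [h4, h2, h3]
end

section
/- Let G be a unital inverse semigroup, (B, β) a G-algebra, and U a G-Hilbert-module action on B regarded as a Hilbert module over itself. Define u_g := U_g ∘ β_{g⁻¹} : B → B for g ∈ G. Then each u_g is a right B-module map (u_g(x b) = u_g(x) b for all x, b ∈ B), and u satisfies the cocycle identities: β_g(U_{g⁻¹}(u_g(a))) = β_{g g⁻¹}(a), u_{g g⁻¹}(a) = u_g(β_g(U_{g⁻¹}(a))), and u_{g h}(a) = u_g(β_g(u_h(β_{g⁻¹}(a)))) for all a ∈ B and g, h ∈ G. (That is, u is a β-cocycle with values in the adjointable operators on B, i.e. in M(B), with u_g* u_g = β_{g g⁻¹}, u_{g g⁻¹} = u_g u_g*, and u_{g h} = u_g β̄_g(u_h).) -/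
open scoped MultiplierAlgebra

namespace InverseMonoid

variable {G : Type*} [InverseMonoid G]

theorem inv_inv' (g : G) : g⁻¹⁻¹ = g :=
  (inv_unique (inv_mul_inv g) (mul_inv_mul g)).symm

theorem idem_inv {e : G} (he : e * e = e) : e⁻¹ = e := by
  have h : e * e * e = e := by rw [he, he]
  exact (inv_unique h h).symm

theorem mul_mul_inv_idem (g : G) : (g * g⁻¹) * (g * g⁻¹) = g * g⁻¹ := by
  rw [← mul_assoc, mul_inv_mul]

theorem inv_mul_mul_idem (g : G) : (g⁻¹ * g) * (g⁻¹ * g) = g⁻¹ * g := by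
  rw [← mul_assoc, inv_mul_inv]

theorem idem_mul_idem {e f : G} (he : e * e = e) (hf : f * f = f) :
    (e * f) * (e * f) = e * f := by
  set a := (e * f)⁻¹ with ha
  have h1 : (e * f) * a * (e * f) = e * f := mul_inv_mul (e * f)
  have h2 : a * (e * f) * a = a := inv_mul_inv (e * f)
  have key : f * a * e = a := by
    apply inv_unique
    · have : (e * f) * (f * a * e) * (e * f) = e * ((f * f) * a * (e * e)) * f := by
        simp [mul_assoc]
      rw [this, he, hf]
      calc e * (f * a * e) * f = (e * f) * a * (e * f) := by simp [mul_assoc]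
        _ = e * f := h1
    · have : (f * a * e) * (e * f) * (f * a * e) = f * (a * ((e * e) * (f * f)) * a) * e := by
        simp [mul_assoc]
      rw [this, he, hf]
      rw [h2]
  have haa : a * a = a := by
    conv_lhs => rw [← key]
    have expand : (f * a * e) * (f * a * e) = f * (a * (e * f) * a) * e := by
      simp [mul_assoc]
    rw [expand, h2, key]
  have hef : e * f = a := by
    have h := idem_inv haa
    rw [ha] at h ⊢
    rw [inv_inv'] at h
    exact h
  rw [hef, haa]

theorem idem_comm {e f : G} (he : e * e = e) (hf : f * f = f) : e * f = f * e := by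
  have hef := idem_mul_idem he hf
  have hfe := idem_mul_idem hf he
  have h1 : (e * f) * (f * e) * (e * f) = e * f := by
    have : (e * f) * (f * e) * (e * f) = e * ((f * f) * (e * e)) * f := by simp [mul_assoc]
    rw [this, he, hf]
    calc e * (f * e) * f = (e * f) * (e * f) := by simp [mul_assoc]
      _ = e * f := hef
  have h2 : (f * e) * (e * f) * (f * e) = f * e := by
    have : (f * e) * (e * f) * (f * e) = f * ((e * e) * (f * f)) * e := by simp [mul_assoc]
    rw [this, he, hf]
    calc f * (e * f) * e = (f * e) * (f * e) := by simp [mul_assoc]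
      _ = f * e := hfe
  have := inv_unique h1 h2
  rw [this, idem_inv hef]

theorem mul_inv_rev' (g h : G) : (g * h)⁻¹ = h⁻¹ * g⁻¹ := by
  have comm := idem_comm (mul_mul_inv_idem h) (inv_mul_mul_idem g)
  symm
  apply inv_unique
  · calc (g * h) * (h⁻¹ * g⁻¹) * (g * h)
        = g * ((h * h⁻¹) * (g⁻¹ * g)) * h := by simp [mul_assoc]
      _ = g * ((g⁻¹ * g) * (h * h⁻¹)) * h := by rw [comm]
      _ = (g * g⁻¹ * g) * (h * h⁻¹ * h) := by simp [mul_assoc]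
      _ = g * h := by rw [mul_inv_mul, mul_inv_mul]
  · calc (h⁻¹ * g⁻¹) * (g * h) * (h⁻¹ * g⁻¹)
        = h⁻¹ * ((g⁻¹ * g) * (h * h⁻¹)) * g⁻¹ := by simp [mul_assoc]
      _ = h⁻¹ * ((h * h⁻¹) * (g⁻¹ * g)) * g⁻¹ := by rw [comm]
      _ = (h⁻¹ * h * h⁻¹) * (g⁻¹ * g * g⁻¹) := by simp [mul_assoc]
      _ = h⁻¹ * g⁻¹ := by rw [inv_mul_inv, inv_mul_inv]

end InverseMonoid

/-- for a `G`-Hilbert-module action `U` on `B` over itself, the maps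
`u_g := U_g ∘ β_{g⁻¹}` are right `B`-module maps and form a `β`-cocycle:
`u_g* u_g = β_{g g⁻¹}`, `u_{g g⁻¹} = u_g u_g*` and `u_{g h} = u_g β̄_g(u_h)`,
where `u_g* = β_g ∘ U_{g⁻¹}` and `β̄_g(m) = β_g ∘ m ∘ β_{g⁻¹}`, all written out pointwise. -/
theorem hilbert_action_gives_cocycle
    {G : Type*} [InverseMonoid G] {B : Type*} [NonUnitalCStarAlgebra B]
    -- `(B, β)` is a `G`-algebra:
    (β : G → B →⋆ₙₐ[ℂ] B)
    (hβ_one : β 1 = NonUnitalStarAlgHom.id ℂ B)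
    (hβ_mul : ∀ g h : G, β (g * h) = (β g).comp (β h))
    (hβ_central : ∀ (g : G) (x y : B), β (g * g⁻¹) x * y = x * β (g * g⁻¹) y)
    -- `U` is a `G`-Hilbert-module action on `B`, regarded as a Hilbert module over
    -- itself via `⟨a, b⟩ = a* b`:
    (U : G → B →ₗ[ℂ] B)
    (hU_one : U 1 = LinearMap.id)
    (hU_mul : ∀ g h : G, U (g * h) = (U g) ∘ₗ (U h))
    (hU_inner : ∀ (g : G) (ξ η : B), star (U g ξ) * U g η = β g (star ξ * η))
    (hU_mod : ∀ (g : G) (ξ b : B), U g (ξ * b) = U g ξ * β g b)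
    (hU_proj : ∀ (g : G) (ξ b : B), U (g * g⁻¹) ξ * b = ξ * β (g * g⁻¹) b)
    : -- each `u_g` is a right `B`-module map:
    (∀ (g : G) (x b : B), U g (β g⁻¹ (x * b)) = U g (β g⁻¹ x) * b) ∧
    -- `u_g* u_g = β_{g g⁻¹}`:
    (∀ (g : G) (a : B), β g (U g⁻¹ (U g (β g⁻¹ a))) = β (g * g⁻¹) a) ∧
    -- `u_{g g⁻¹} = u_g u_g*`:
    (∀ (g : G) (a : B), U (g * g⁻¹) (β (g * g⁻¹)⁻¹ a) = U g (β g⁻¹ (β g (U g⁻¹ a)))) ∧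
    -- `u_{g h} = u_g β̄_g(u_h)`:
    (∀ (g h : G) (a : B),
      U (g * h) (β (g * h)⁻¹ a) = U g (β g⁻¹ (β g (U h (β h⁻¹ (β g⁻¹ a)))))) := by
  have hβ : ∀ (g h : G) (x : B), β (g * h) x = β g (β h x) := by
    intro g h x; rw [hβ_mul]; rfl
  have hU : ∀ (g h : G) (x : B), U (g * h) x = U g (U h x) := by
    intro g h x; rw [hU_mul]; rfl
  -- key: `U` equals `β` on idempotents of the form `g * g⁻¹`
  have hUe : ∀ (g : G) (η : B), U (g * g⁻¹) η = β (g * g⁻¹) η := by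
    intro g η
    have hd : ∀ b : B, (U (g * g⁻¹) η - β (g * g⁻¹) η) * b = 0 := by
      intro b
      rw [sub_mul, hU_proj, hβ_central, sub_self]
    have h0 := hd (star (U (g * g⁻¹) η - β (g * g⁻¹) η))
    rw [CStarRing.mul_star_self_eq_zero_iff] at h0
    exact sub_eq_zero.mp h0
  have hUf : ∀ (g : G) (η : B), U (g⁻¹ * g) η = β (g⁻¹ * g) η := by
    intro g η
    have h := hUe g⁻¹ η
    rwa [InverseMonoid.inv_inv'] at h
  refine ⟨?_, ?_, ?_, ?_⟩
  · -- right module map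
    intro g x b
    have e1 : U (g * g⁻¹) (U g (β g⁻¹ x)) = U g (β g⁻¹ x) := by
      rw [← hU, InverseMonoid.mul_inv_mul]
    calc U g (β g⁻¹ (x * b))
        = U g (β g⁻¹ x * β g⁻¹ b) := by rw [map_mul]
      _ = U g (β g⁻¹ x) * β g (β g⁻¹ b) := hU_mod g _ _
      _ = U g (β g⁻¹ x) * β (g * g⁻¹) b := by rw [← hβ]
      _ = U (g * g⁻¹) (U g (β g⁻¹ x)) * b := (hU_proj g _ b).symm
      _ = U g (β g⁻¹ x) * b := by rw [e1]
  · -- u_g* u_g = β_{g g⁻¹}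
    intro g a
    have hg : g * (g⁻¹ * g) * g⁻¹ = g * g⁻¹ := by
      rw [← mul_assoc, InverseMonoid.mul_inv_mul]
    calc β g (U g⁻¹ (U g (β g⁻¹ a)))
        = β g (U (g⁻¹ * g) (β g⁻¹ a)) := by rw [hU]
      _ = β g (β (g⁻¹ * g) (β g⁻¹ a)) := by rw [hUf]
      _ = β (g * (g⁻¹ * g)) (β g⁻¹ a) := (hβ g (g⁻¹ * g) _).symm
      _ = β (g * (g⁻¹ * g) * g⁻¹) a := (hβ (g * (g⁻¹ * g)) g⁻¹ a).symm
      _ = β (g * g⁻¹) a := by rw [hg]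
  · -- u_{g g⁻¹} = u_g u_g*
    intro g a
    have hinv : ((g * g⁻¹) : G)⁻¹ = g * g⁻¹ :=
      InverseMonoid.idem_inv (InverseMonoid.mul_mul_inv_idem g)
    calc U (g * g⁻¹) (β (g * g⁻¹)⁻¹ a)
        = U (g * g⁻¹) (β (g * g⁻¹) a) := by rw [hinv]
      _ = β (g * g⁻¹) (β (g * g⁻¹) a) := hUe g _
      _ = β ((g * g⁻¹) * (g * g⁻¹)) a := (hβ _ _ _).symm
      _ = β (g * g⁻¹) a := by rw [InverseMonoid.mul_mul_inv_idem]
      _ = U (g * g⁻¹) a := (hUe g a).symm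
      _ = U g (U g⁻¹ a) := hU g g⁻¹ a
      _ = U g (U ((g⁻¹ * g) * g⁻¹) a) := by rw [InverseMonoid.inv_mul_inv]
      _ = U g (U (g⁻¹ * g) (U g⁻¹ a)) := by rw [hU (g⁻¹ * g) g⁻¹ a]
      _ = U g (β (g⁻¹ * g) (U g⁻¹ a)) := by rw [hUf]
      _ = U g (β g⁻¹ (β g (U g⁻¹ a))) := by rw [hβ]
  · -- cocycle identity
    intro g h a
    have hgh : g * ((g⁻¹ * g) * h) = g * h := by
      rw [← mul_assoc, ← mul_assoc, InverseMonoid.mul_inv_mul]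
    calc U (g * h) (β (g * h)⁻¹ a)
        = U (g * h) (β (h⁻¹ * g⁻¹) a) := by rw [InverseMonoid.mul_inv_rev']
      _ = U (g * h) (β h⁻¹ (β g⁻¹ a)) := by rw [hβ]
      _ = U (g * ((g⁻¹ * g) * h)) (β h⁻¹ (β g⁻¹ a)) := by rw [hgh]
      _ = U g (U ((g⁻¹ * g) * h) (β h⁻¹ (β g⁻¹ a))) := hU _ _ _
      _ = U g (U (g⁻¹ * g) (U h (β h⁻¹ (β g⁻¹ a)))) := by rw [hU (g⁻¹ * g) h]
      _ = U g (β (g⁻¹ * g) (U h (β h⁻¹ (β g⁻¹ a)))) := by rw [hUf]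
      _ = U g (β g⁻¹ (β g (U h (β h⁻¹ (β g⁻¹ a))))) := by rw [hβ]
end

section
/- Let G be a unital inverse semigroup, (B, β) a G-algebra, and u : G → M(B) a β-cocycle. Define W_g : B → B by W_g(a) := u_g β_g(a). Then W is a G-Hilbert-module action on B regarded as a Hilbert module over itself: W is a unital semigroup homomorphism (W_{g h} = W_g ∘ W_h), W_g(x)* W_g(y) = β_g(x* y), W_g(x b) = W_g(x) β_g(b), and W_{g g⁻¹}(x) b = x β_{g g⁻¹}(b) for all g, h ∈ G and x, y, b ∈ B. Moreover W_g(W_{g⁻¹}(a)) = (u_g u_g*) a for all a ∈ B, and u_g u_g* is a self-adjoint idempotent in M(B). -/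
open scoped MultiplierAlgebra

lemma myCancelRight {B : Type*} [NonUnitalCStarAlgebra B] {c d : B}
    (h : ∀ y : B, c * y = d * y) : c = d := by
  have h0 : (c - d) * star (c - d) = 0 := by
    rw [sub_mul, h]; exact sub_self _
  rw [CStarRing.mul_star_self_eq_zero_iff] at h0
  exact sub_eq_zero.mp h0

lemma myCancelLeft {B : Type*} [NonUnitalCStarAlgebra B] {c d : B}
    (h : ∀ x : B, x * c = x * d) : c = d := by
  have h0 : star (c - d) * (c - d) = 0 := by
    rw [mul_sub, h]; exact sub_self _
  rw [CStarRing.star_mul_self_eq_zero_iff] at h0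
  exact sub_eq_zero.mp h0

lemma myFstMul {B : Type*} [NonUnitalCStarAlgebra B] (m : 𝓜(ℂ, B)) (a b : B) :
    m.fst (a * b) = m.fst a * b := by
  apply myCancelLeft; intro x
  calc x * m.fst (a * b) = m.snd x * (a * b) := (m.central x (a * b)).symm
    _ = m.snd x * a * b := (mul_assoc _ _ _).symm
    _ = x * m.fst a * b := by rw [m.central]
    _ = x * (m.fst a * b) := mul_assoc _ _ _

lemma myMExt {B : Type*} [NonUnitalCStarAlgebra B] {m n : 𝓜(ℂ, B)}
    (h : ∀ b : B, m.fst b = n.fst b) : m = n := by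
  have hfst : m.fst = n.fst := ContinuousLinearMap.ext h
  apply DoubleCentralizer.ext
  refine Prod.ext hfst (ContinuousLinearMap.ext fun x => ?_)
  apply myCancelRight; intro y
  rw [m.central, n.central, hfst]

lemma myMulFstApply {B : Type*} [NonUnitalCStarAlgebra B] (m n : 𝓜(ℂ, B)) (b : B) :
    (m * n).fst b = m.fst (n.fst b) := by
  rw [DoubleCentralizer.mul_fst]; rfl

/-- a `β`-cocycle `u` induces a `G`-Hilbert-module action `W_g := u_g β_g(·)`
on `B` regarded as a Hilbert module over itself; moreover `W_g W_{g⁻¹} = u_g u_g*`, which is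
a self-adjoint idempotent in `M(B)`. -/
theorem cocycle_gives_hilbert_action
    {G : Type*} [InverseMonoid G] {B : Type*} [NonUnitalCStarAlgebra B]
    -- `(B, β)` is a `G`-algebra:
    (β : G → B →⋆ₙₐ[ℂ] B)
    (hβ_one : β 1 = NonUnitalStarAlgHom.id ℂ B)
    (hβ_mul : ∀ g h : G, β (g * h) = (β g).comp (β h))
    (hβ_central : ∀ (g : G) (x y : B), β (g * g⁻¹) x * y = x * β (g * g⁻¹) y)
    -- `β̄` is the extension of `β` to the multiplier algebra `M(B)`:
    (βbar : G → 𝓜(ℂ, B) → 𝓜(ℂ, B))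
    (hβbar : ∀ (g : G) (m : 𝓜(ℂ, B)) (b : B), (βbar g m).fst b = β g (m.fst (β g⁻¹ b)))
    -- `u` is a `β`-cocycle:
    (u : G → 𝓜(ℂ, B))
    (hu₁ : ∀ (g : G) (b : B), (star (u g) * u g).fst b = β (g * g⁻¹) b)
    (hu₂ : ∀ g : G, u (g * g⁻¹) = u g * star (u g))
    (hu₃ : ∀ g h : G, u (g * h) = u g * βbar g (u h))
    : -- `W` is a unital semigroup homomorphism:
    (∀ x : B, (u 1).fst (β 1 x) = x) ∧
    (∀ (g h : G) (x : B),
      (u (g * h)).fst (β (g * h) x) = (u g).fst (β g ((u h).fst (β h x)))) ∧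
    -- `⟨W_g x, W_g y⟩ = β_g ⟨x, y⟩`:
    (∀ (g : G) (x y : B),
      star ((u g).fst (β g x)) * (u g).fst (β g y) = β g (star x * y)) ∧
    -- `W_g (x b) = W_g(x) β_g(b)`:
    (∀ (g : G) (x b : B), (u g).fst (β g (x * b)) = (u g).fst (β g x) * β g b) ∧
    -- `W_{g g⁻¹}(x) b = x β_{g g⁻¹}(b)`:
    (∀ (g : G) (x b : B), (u (g * g⁻¹)).fst (β (g * g⁻¹) x) * b = x * β (g * g⁻¹) b) ∧
    -- `W_g W_{g⁻¹} = u_g u_g*`: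
    (∀ (g : G) (a : B),
      (u g).fst (β g ((u g⁻¹).fst (β g⁻¹ a))) = (u g * star (u g)).fst a) ∧
    -- `u_g u_g*` is a self-adjoint idempotent in `M(B)`:
    (∀ g : G, star (u g * star (u g)) = u g * star (u g)) ∧
    (∀ g : G, (u g * star (u g)) * (u g * star (u g)) = u g * star (u g)) := by
  -- basic inverse-monoid facts
  have hinvinv : ∀ g : G, (g⁻¹)⁻¹ = g := fun g =>
    (InverseMonoid.inv_unique (InverseMonoid.inv_mul_inv g) (InverseMonoid.mul_inv_mul g)).symm
  have hee : ∀ g : G, (g * g⁻¹) * (g * g⁻¹) = g * g⁻¹ := fun g => by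
    rw [mul_assoc, ← mul_assoc g⁻¹ g g⁻¹, InverseMonoid.inv_mul_inv]
  have hinv_e : ∀ g : G, (g * g⁻¹)⁻¹ = g * g⁻¹ := fun g =>
    (InverseMonoid.inv_unique (by rw [hee, hee]) (by rw [hee, hee])).symm
  have hgig : ∀ g : G, g * (g⁻¹ * g) = g := fun g => by
    rw [← mul_assoc]; exact InverseMonoid.mul_inv_mul g
  -- β of the idempotent g g⁻¹ is idempotent
  have hβee : ∀ (g : G) (b : B), β (g * g⁻¹) (β (g * g⁻¹) b) = β (g * g⁻¹) b := fun g b => by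
    have := hβ_mul (g * g⁻¹) (g * g⁻¹)
    rw [hee] at this
    calc β (g * g⁻¹) (β (g * g⁻¹) b) = ((β (g * g⁻¹)).comp (β (g * g⁻¹))) b := rfl
      _ = β (g * g⁻¹) b := by rw [← this]
  -- β (g g⁻¹) commutes with the left action of every multiplier
  have hcomm : ∀ (g : G) (m : 𝓜(ℂ, B)) (b : B),
      β (g * g⁻¹) (m.fst b) = m.fst (β (g * g⁻¹) b) := by
    intro g m b
    apply myCancelRight; intro y
    calc β (g * g⁻¹) (m.fst b) * y = m.fst b * β (g * g⁻¹) y := hβ_central g _ y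
      _ = m.fst (b * β (g * g⁻¹) y) := (myFstMul m b _).symm
      _ = m.fst (β (g * g⁻¹) b * y) := by rw [hβ_central g b y]
      _ = m.fst (β (g * g⁻¹) b) * y := myFstMul m _ y
  -- u 1 = 1
  have h1inv : (1 : G)⁻¹ = 1 :=
    (InverseMonoid.inv_unique (by rw [one_mul, one_mul]) (by rw [one_mul, one_mul])).symm
  have hu1one : star (u 1) * u 1 = 1 := by
    apply myMExt; intro b
    rw [hu₁ 1 b, h1inv, one_mul, hβ_one]
    rw [DoubleCentralizer.one_fst]
    rfl
  have hu2one : u 1 = u 1 * star (u 1) := by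
    have := hu₂ 1; rwa [h1inv, one_mul] at this
  have hstar1 : star (u 1) = u 1 := by
    conv_lhs => rw [hu2one]
    rw [star_mul, star_star, ← hu2one]
  have hu_one : u 1 = 1 := by
    calc u 1 = u 1 * star (u 1) := hu2one
      _ = star (u 1) * u 1 := by rw [hstar1]
      _ = 1 := hu1one
  -- the key partial-isometry facts, for each g
  have hq : ∀ g : G, (star (u g) * u g) * (star (u g) * u g) = star (u g) * u g := by
    intro g
    apply myMExt; intro b
    rw [myMulFstApply, hu₁, hu₁]
    exact hβee g b
  have huq : ∀ g : G, u g * (star (u g) * u g) = u g := by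
    intro g
    have hqq := hq g
    have hsq : star (star (u g) * u g) = star (u g) * u g := by rw [star_mul, star_star]
    have hv : star (u g - u g * (star (u g) * u g)) * (u g - u g * (star (u g) * u g)) = 0 := by
      rw [star_sub, star_mul, hsq, sub_mul, mul_sub, mul_sub]
      have e1 : star (u g) * (u g * (star (u g) * u g)) = star (u g) * u g := by
        rw [← mul_assoc, hqq]
      have e2 : star (u g) * u g * star (u g) * u g = star (u g) * u g := by
        rw [mul_assoc, hqq]
      have e3 : star (u g) * u g * star (u g) * (u g * (star (u g) * u g))
          = star (u g) * u g := by
        rw [← mul_assoc, e2, hqq]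
      rw [e1, e2, e3]
      abel
    rw [CStarRing.star_mul_self_eq_zero_iff, sub_eq_zero] at hv
    exact hv.symm
  have hpp : ∀ g : G, (u g * star (u g)) * (u g * star (u g)) = u g * star (u g) := by
    intro g
    calc (u g * star (u g)) * (u g * star (u g))
        = u g * (star (u g) * u g) * star (u g) := by
          rw [mul_assoc (u g) (star (u g)) (u g * star (u g)),
            ← mul_assoc (star (u g)) (u g) (star (u g)), ← mul_assoc]
      _ = u g * star (u g) := by rw [huq g]
  -- (u g * star (u g)).fst = β (g g⁻¹)
  have hpfst : ∀ (g : G) (b : B), (u g * star (u g)).fst b = β (g * g⁻¹) b := by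
    intro g b
    have h1 := hu₁ (g * g⁻¹) b
    rw [hinv_e, hee] at h1
    rw [hu₂ g] at h1
    rw [star_mul, star_star] at h1
    -- h1 : (u g * star (u g) * (u g * star (u g))).fst b = β (g * g⁻¹) b
    rw [hpp g] at h1
    exact h1
  refine ⟨?_, ?_, ?_, ?_, ?_, ?_, ?_, hpp⟩
  · -- W_1 = id
    intro x
    rw [hu_one, hβ_one, DoubleCentralizer.one_fst]
    rfl
  · -- multiplicativity
    intro g h x
    rw [hu₃ g h, myMulFstApply, hβbar]
    congr 1
    have hinner : β g⁻¹ (β (g * h) x) = β (g⁻¹ * (g⁻¹)⁻¹) (β h x) := by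
      have h1 : β g⁻¹ (β (g * h) x) = β (g⁻¹ * (g * h)) x := by
        rw [hβ_mul g⁻¹ (g * h)]; rfl
      have h2 : β (g⁻¹ * (g * h)) x = β (g⁻¹ * g) (β h x) := by
        rw [← mul_assoc, hβ_mul (g⁻¹ * g) h]; rfl
      rw [h1, h2, hinvinv]
    rw [hinner, ← hcomm g⁻¹ (u h)]
    rw [hinvinv g]
    have h3 : β g (β (g⁻¹ * g) ((u h).fst (β h x))) = β (g * (g⁻¹ * g)) ((u h).fst (β h x)) := by
      rw [hβ_mul g (g⁻¹ * g)]; rfl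
    rw [h3, hgig]
  · -- inner products
    intro g x y
    have hstarfst : star ((u g).fst (β g x)) = (star (u g)).snd (star (β g x)) := by
      rw [DoubleCentralizer.star_snd, star_star]
    rw [hstarfst, (star (u g)).central]
    have h4 : (star (u g)).fst ((u g).fst (β g y)) = β (g * g⁻¹) (β g y) := by
      rw [← myMulFstApply, hu₁]
    have h5 : β (g * g⁻¹) (β g y) = β g y := by
      have := hβ_mul (g * g⁻¹) g
      rw [InverseMonoid.mul_inv_mul] at this
      calc β (g * g⁻¹) (β g y) = ((β (g * g⁻¹)).comp (β g)) y := rfl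
        _ = β g y := by rw [← this]
    rw [h4, h5, ← map_star (β g) x, ← map_mul (β g)]
  · -- right module map
    intro g x b
    rw [map_mul (β g), myFstMul]
  · -- W_{g g⁻¹} x * b = x β_{g g⁻¹} b
    intro g x b
    rw [hu₂ g, hpfst g, hβee, hβ_central]
  · -- W_g ∘ W_{g⁻¹} = u_g u_g*
    intro g a
    rw [← hβbar g (u g⁻¹) a, ← myMulFstApply, ← hu₃ g g⁻¹, hu₂ g]
  · -- self-adjoint
    intro g
    rw [star_mul, star_star]
end

section
/- Let G be a unital inverse semigroup, (A, α) and (B, β) G-algebras, u : G → M(B) a β-cocycle, and φ : A → M(B) a *-homomorphism satisfying u_g β̄_g(φ(a)) u_g* = φ(α_g(a)) in M(B) for all a ∈ A and g ∈ G. Define W_g : B → B by W_g(x) := u_g β_g(x). Then φ(α_g(a)) x = W_g(φ(a) W_{g⁻¹}(x)) for all a ∈ A, x ∈ B, and g ∈ G; that is, φ(α_g(a)) = W_g φ(a) W_{g⁻¹} as operators on B. -/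
open scoped MultiplierAlgebra

/-- if `φ : A → M(B)` is a `*`-homomorphism with
`u_g β̄_g(φ(a)) u_g* = φ(α_g(a))` for a `β`-cocycle `u`, then
`φ(α_g(a)) = W_g φ(a) W_{g⁻¹}` as operators on `B`, where `W_g(x) = u_g β_g(x)`. -/
theorem equivariance_via_W
    {G : Type*} [InverseMonoid G] {A : Type*} [NonUnitalCStarAlgebra A]
    -- `(A, α)` is a `G`-algebra:
    (α : G → A →⋆ₙₐ[ℂ] A)
    (hα_one : α 1 = NonUnitalStarAlgHom.id ℂ A)
    (hα_mul : ∀ g h : G, α (g * h) = (α g).comp (α h))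
    (hα_central : ∀ (g : G) (x y : A), α (g * g⁻¹) x * y = x * α (g * g⁻¹) y)
    {B : Type*} [NonUnitalCStarAlgebra B]
    -- `(B, β)` is a `G`-algebra:
    (β : G → B →⋆ₙₐ[ℂ] B)
    (hβ_one : β 1 = NonUnitalStarAlgHom.id ℂ B)
    (hβ_mul : ∀ g h : G, β (g * h) = (β g).comp (β h))
    (hβ_central : ∀ (g : G) (x y : B), β (g * g⁻¹) x * y = x * β (g * g⁻¹) y)
    -- `β̄` is the extension of `β` to the multiplier algebra `M(B)`:
    (βbar : G → 𝓜(ℂ, B) → 𝓜(ℂ, B))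
    (hβbar : ∀ (g : G) (m : 𝓜(ℂ, B)) (b : B), (βbar g m).fst b = β g (m.fst (β g⁻¹ b)))
    -- `u` is a `β`-cocycle:
    (u : G → 𝓜(ℂ, B))
    (hu₁ : ∀ (g : G) (b : B), (star (u g) * u g).fst b = β (g * g⁻¹) b)
    (hu₂ : ∀ g : G, u (g * g⁻¹) = u g * star (u g))
    (hu₃ : ∀ g h : G, u (g * h) = u g * βbar g (u h))
    -- `φ : A → M(B)` is a `*`-homomorphism intertwined by the cocycle `u`:
    (φ : A →⋆ₙₐ[ℂ] 𝓜(ℂ, B))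
    (hφ : ∀ (a : A) (g : G), u g * βbar g (φ a) * star (u g) = φ (α g a)) :
    ∀ (a : A) (x : B) (g : G),
      (φ (α g a)).fst x = (u g).fst (β g ((φ a).fst ((u g⁻¹).fst (β g⁻¹ x)))) := by
  intro a x g
  -- basic inverse-semigroup facts
  have inv_inv : ∀ k : G, k⁻¹⁻¹ = k := fun k =>
    (InverseMonoid.inv_unique (InverseMonoid.inv_mul_inv k) (InverseMonoid.mul_inv_mul k)).symm
  have idem : ∀ k : G, (k * k⁻¹) * (k * k⁻¹) = k * k⁻¹ := fun k => by
    calc (k * k⁻¹) * (k * k⁻¹) = (k * k⁻¹ * k) * k⁻¹ := by simp [mul_assoc]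
    _ = k * k⁻¹ := by rw [InverseMonoid.mul_inv_mul]
  have inv_idem : ∀ k : G, (k * k⁻¹)⁻¹ = k * k⁻¹ := fun k =>
    (InverseMonoid.inv_unique (g := k * k⁻¹) (h := k * k⁻¹)
      (by rw [idem k, idem k]) (by rw [idem k, idem k])).symm
  -- the value of `u` at an idempotent `k * k⁻¹` acts as `β (k * k⁻¹)`
  have key : ∀ (k : G) (b : B), (u (k * k⁻¹)).fst b = β (k * k⁻¹) b := by
    intro k b
    have hstar : star (u (k * k⁻¹)) = u (k * k⁻¹) := by
      rw [hu₂ k, star_mul, star_star]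
    have hsq : u (k * k⁻¹) = u (k * k⁻¹) * u (k * k⁻¹) := by
      conv_lhs => rw [show k * k⁻¹ = (k * k⁻¹) * (k * k⁻¹)⁻¹ by rw [inv_idem, idem]]
      rw [hu₂ (k * k⁻¹), hstar]
    calc (u (k * k⁻¹)).fst b = (u (k * k⁻¹) * u (k * k⁻¹)).fst b := by rw [← hsq]
      _ = (star (u (k * k⁻¹)) * u (k * k⁻¹)).fst b := by rw [hstar]
      _ = β ((k * k⁻¹) * (k * k⁻¹)⁻¹) b := hu₁ (k * k⁻¹) b
      _ = β (k * k⁻¹) b := by rw [inv_idem, idem]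
  -- convenient composition form of `hβ_mul`
  have hβc : ∀ (g h : G) (b : B), β (g * h) b = β g (β h b) := by
    intro g h b; rw [hβ_mul g h]; rfl
  -- the key identity: `β g⁻¹ ((star (u g)).fst x) = (u g⁻¹).fst (β g⁻¹ x)`
  have main : β g⁻¹ ((star (u g)).fst x) = (u g⁻¹).fst (β g⁻¹ x) := by
    set P : B := β g⁻¹ ((star (u g)).fst x) with hP
    -- Step A : P = β (g⁻¹ * g) P
    have stepA : P = β (g⁻¹ * g) P := by
      conv_lhs => rw [hP, show (g⁻¹ : G) = (g⁻¹ * g) * g⁻¹ from (InverseMonoid.inv_mul_inv g).symm,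
        hβc (g⁻¹ * g) g⁻¹]
    -- β (g⁻¹ * g) acts as (u (g⁻¹ * g)).fst
    have stepB : ∀ b : B, β (g⁻¹ * g) b = (u (g⁻¹ * g)).fst b := by
      intro b
      have := key g⁻¹ b
      rw [inv_inv g] at this
      exact this.symm
    -- expand u (g⁻¹ * g) by the cocycle identity
    have stepC : ∀ b : B, (u (g⁻¹ * g)).fst b = (u g⁻¹).fst (β g⁻¹ ((u g).fst (β g b))) := by
      intro b
      rw [hu₃ g⁻¹ g, DoubleCentralizer.mul_fst, ContinuousLinearMap.mul_apply,
        hβbar g⁻¹ (u g) b, inv_inv g]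
    -- compute (u g).fst (β g P)
    have stepD : (u g).fst (β g P) = β (g * g⁻¹) x := by
      have h1 : β g P = (star (u g) * u g).fst ((star (u g)).fst x) := by
        rw [hP, ← hβc g g⁻¹, hu₁ g]
      have h2 : (u g).fst (β g P)
          = ((u g * star (u g)) * (u g * star (u g))).fst x := by
        rw [h1]
        simp only [DoubleCentralizer.mul_fst, ContinuousLinearMap.mul_apply]
      rw [h2, ← hu₂ g, DoubleCentralizer.mul_fst, ContinuousLinearMap.mul_apply,
        key g x, key g (β (g * g⁻¹) x), ← hβc (g * g⁻¹) (g * g⁻¹), idem g]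
    -- assemble
    calc P = β (g⁻¹ * g) P := stepA
      _ = (u (g⁻¹ * g)).fst P := stepB P
      _ = (u g⁻¹).fst (β g⁻¹ ((u g).fst (β g P))) := stepC P
      _ = (u g⁻¹).fst (β g⁻¹ (β (g * g⁻¹) x)) := by rw [stepD]
      _ = (u g⁻¹).fst (β g⁻¹ x) := by
          rw [← hβc g⁻¹ (g * g⁻¹), show g⁻¹ * (g * g⁻¹) = g⁻¹ by
            rw [← mul_assoc, InverseMonoid.inv_mul_inv]]
  -- main computation
  rw [← hφ a g]
  simp only [DoubleCentralizer.mul_fst, ContinuousLinearMap.mul_apply]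
  rw [hβbar g (φ a) ((star (u g)).fst x), main]
end

section
/- Let G be a unital inverse semigroup, (A, α) and (B, β) G-algebras, and let (φ₊, φ₋, u₊, u₋) be an equivariant A,B-cocycle (with B in place of B ⊗ K). Set A_x := {(a, m) ∈ A ⊕ M(B) : φ₊(a) − m ∈ B}, and define γ_g(a, m) := (α_g(a), u₊_g β̄_g(m) u₊_g*) for g ∈ G. Then γ_g maps A_x into A_x for every g ∈ G, each γ_g is a *-endomorphism of A_x, γ is a unital semigroup homomorphism (γ_{g h} = γ_g ∘ γ_h), and γ_{g g⁻¹}(x) y = x γ_{g g⁻¹}(y) for all x, y ∈ A_x and g ∈ G. Hence (A_x, γ) is a G-algebra. -/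
open scoped MultiplierAlgebra

namespace IMHelp

variable {G : Type*} [InverseMonoid G]

lemma inv_inv' (g : G) : g⁻¹⁻¹ = g :=
  (InverseMonoid.inv_unique (InverseMonoid.inv_mul_inv g) (InverseMonoid.mul_inv_mul g)).symm

lemma inv_one' : (1 : G)⁻¹ = 1 :=
  (InverseMonoid.inv_unique (by simp) (by simp)).symm

lemma idem_inv {e : G} (he : e * e = e) : e⁻¹ = e :=
  (InverseMonoid.inv_unique (by rw [he, he]) (by rw [he, he])).symm

lemma gg_idem (g : G) : (g * g⁻¹) * (g * g⁻¹) = g * g⁻¹ := by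
  calc (g * g⁻¹) * (g * g⁻¹) = (g * g⁻¹ * g) * g⁻¹ := by simp [mul_assoc]
  _ = g * g⁻¹ := by rw [InverseMonoid.mul_inv_mul]

lemma igg_idem (g : G) : (g⁻¹ * g) * (g⁻¹ * g) = g⁻¹ * g := by
  calc (g⁻¹ * g) * (g⁻¹ * g) = (g⁻¹ * g * g⁻¹) * g := by simp [mul_assoc]
  _ = g⁻¹ * g := by rw [InverseMonoid.inv_mul_inv]

lemma idem_mul_idem {e f : G} (he : e * e = e) (hf : f * f = f) :
    (e * f) * (e * f) = e * f := by
  have h1 : (e * f) * (f * (e*f)⁻¹ * e) * (e * f) = e * f := by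
    calc (e * f) * (f * (e*f)⁻¹ * e) * (e * f)
        = e * ((f * f) * ((e*f)⁻¹ * ((e * e) * f))) := by simp [mul_assoc]
      _ = e * (f * ((e*f)⁻¹ * (e * f))) := by rw [he, hf]
      _ = (e * f) * (e*f)⁻¹ * (e * f) := by simp [mul_assoc]
      _ = e * f := InverseMonoid.mul_inv_mul _
  have h2 : (f * (e*f)⁻¹ * e) * (e * f) * (f * (e*f)⁻¹ * e) = f * (e*f)⁻¹ * e := by
    calc (f * (e*f)⁻¹ * e) * (e * f) * (f * (e*f)⁻¹ * e)
        = f * ((e*f)⁻¹ * ((e * e) * ((f * f) * ((e*f)⁻¹ * e)))) := by simp [mul_assoc]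
      _ = f * ((e*f)⁻¹ * (e * (f * ((e*f)⁻¹ * e)))) := by rw [he, hf]
      _ = f * ((e*f)⁻¹ * (e * f) * (e*f)⁻¹) * e := by simp [mul_assoc]
      _ = f * (e*f)⁻¹ * e := by rw [InverseMonoid.inv_mul_inv]
  have hfxe : f * (e*f)⁻¹ * e = (e*f)⁻¹ := InverseMonoid.inv_unique h1 h2
  have hxx : (e*f)⁻¹ * (e*f)⁻¹ = (e*f)⁻¹ := by
    conv_lhs => rw [← hfxe]
    calc (f * (e*f)⁻¹ * e) * (f * (e*f)⁻¹ * e)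
        = f * ((e*f)⁻¹ * (e * f) * (e*f)⁻¹) * e := by simp [mul_assoc]
      _ = f * (e*f)⁻¹ * e := by rw [InverseMonoid.inv_mul_inv]
      _ = (e*f)⁻¹ := hfxe
  have hef : e * f = (e*f)⁻¹ := (inv_inv' (e*f)).symm.trans (idem_inv hxx)
  rw [hef]; exact hxx

lemma idem_comm {e f : G} (he : e * e = e) (hf : f * f = f) : e * f = f * e := by
  have hef := idem_mul_idem he hf
  have hfe := idem_mul_idem hf he
  have h1 : (e * f) * (f * e) * (e * f) = e * f := by
    calc (e * f) * (f * e) * (e * f)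
        = e * ((f * f) * ((e * e) * f)) := by simp [mul_assoc]
      _ = e * (f * (e * f)) := by rw [he, hf]
      _ = (e * f) * (e * f) := by simp [mul_assoc]
      _ = e * f := hef
  have h2 : (f * e) * (e * f) * (f * e) = f * e := by
    calc (f * e) * (e * f) * (f * e)
        = f * ((e * e) * ((f * f) * e)) := by simp [mul_assoc]
      _ = f * (e * (f * e)) := by rw [he, hf]
      _ = (f * e) * (f * e) := by simp [mul_assoc]
      _ = f * e := hfe
  have h3 : f * e = (e * f)⁻¹ := InverseMonoid.inv_unique h1 h2
  rw [h3, idem_inv hef]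

lemma mul_inv_rev' (g h : G) : (g * h)⁻¹ = h⁻¹ * g⁻¹ := by
  have hc : (g⁻¹ * g) * (h * h⁻¹) = (h * h⁻¹) * (g⁻¹ * g) :=
    idem_comm (igg_idem g) (gg_idem h)
  have h1 : (g * h) * (h⁻¹ * g⁻¹) * (g * h) = g * h := by
    calc (g * h) * (h⁻¹ * g⁻¹) * (g * h)
        = g * (((h * h⁻¹) * (g⁻¹ * g)) * h) := by simp [mul_assoc]
      _ = g * (((g⁻¹ * g) * (h * h⁻¹)) * h) := by rw [← hc]
      _ = (g * g⁻¹ * g) * (h * h⁻¹ * h) := by simp [mul_assoc]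
      _ = g * h := by rw [InverseMonoid.mul_inv_mul, InverseMonoid.mul_inv_mul]
  have h2 : (h⁻¹ * g⁻¹) * (g * h) * (h⁻¹ * g⁻¹) = h⁻¹ * g⁻¹ := by
    calc (h⁻¹ * g⁻¹) * (g * h) * (h⁻¹ * g⁻¹)
        = h⁻¹ * (((g⁻¹ * g) * (h * h⁻¹)) * g⁻¹) := by simp [mul_assoc]
      _ = h⁻¹ * (((h * h⁻¹) * (g⁻¹ * g)) * g⁻¹) := by rw [hc]
      _ = (h⁻¹ * h * h⁻¹) * (g⁻¹ * g * g⁻¹) := by simp [mul_assoc]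
      _ = h⁻¹ * g⁻¹ := by rw [InverseMonoid.inv_mul_inv, InverseMonoid.inv_mul_inv]
  exact (InverseMonoid.inv_unique h1 h2).symm

end IMHelp

namespace MHelp

variable {B : Type*} [NonUnitalCStarAlgebra B]

lemma faithR {x y : B} (h : ∀ c : B, x * c = y * c) : x = y := by
  have h0 : (x - y) * star (x - y) = 0 := by
    rw [sub_mul, h (star (x - y)), sub_self]
  exact sub_eq_zero.mp ((CStarRing.mul_star_self_eq_zero_iff _).mp h0)

lemma faithL {x y : B} (h : ∀ c : B, c * x = c * y) : x = y := by
  have h0 : star (x - y) * (x - y) = 0 := by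
    rw [mul_sub, h (star (x - y)), sub_self]
  exact sub_eq_zero.mp ((CStarRing.star_mul_self_eq_zero_iff _).mp h0)

lemma mext {m n : 𝓜(ℂ, B)} (h : ∀ b, m.fst b = n.fst b) : m = n := by
  have hs : ∀ b, m.snd b = n.snd b := fun b =>
    faithR fun c => by rw [m.central, n.central, h]
  exact DoubleCentralizer.ext ℂ B m n
    (Prod.ext (ContinuousLinearMap.ext h) (ContinuousLinearMap.ext hs))

lemma fst_mul_right (m : 𝓜(ℂ, B)) (x c : B) : m.fst (x * c) = m.fst x * c :=
  faithL fun d => by rw [← m.central, ← mul_assoc, m.central, mul_assoc]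

lemma mulfst (m n : 𝓜(ℂ, B)) (b : B) : (m * n).fst b = m.fst (n.fst b) := by
  rw [DoubleCentralizer.mul_fst]; rfl

lemma addfst (m n : 𝓜(ℂ, B)) (b : B) : (m + n).fst b = m.fst b + n.fst b := by
  rw [DoubleCentralizer.add_fst]; rfl

lemma subfst (m n : 𝓜(ℂ, B)) (b : B) : (m - n).fst b = m.fst b - n.fst b := by
  rw [DoubleCentralizer.sub_fst]; rfl

lemma smulfst (c : ℂ) (m : 𝓜(ℂ, B)) (b : B) : (c • m).fst b = c • m.fst b := by
  rw [DoubleCentralizer.smul_fst]; rfl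

lemma onefst (b : B) : (1 : 𝓜(ℂ, B)).fst b = b := by
  rw [DoubleCentralizer.one_fst]; rfl

lemma coefst (x b : B) : ((x : 𝓜(ℂ, B))).fst b = x * b := rfl

lemma mul_coe (m : 𝓜(ℂ, B)) (x : B) : m * (x : 𝓜(ℂ, B)) = ((m.fst x : B) : 𝓜(ℂ, B)) :=
  mext fun b => by rw [mulfst, coefst, coefst, fst_mul_right]

lemma coe_mul (m : 𝓜(ℂ, B)) (x : B) : (x : 𝓜(ℂ, B)) * m = ((m.snd x : B) : 𝓜(ℂ, B)) :=
  mext fun b => by rw [mulfst, coefst, coefst, m.central]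

lemma fst_central_comm (m : 𝓜(ℂ, B)) (ε : B → B)
    (hc : ∀ x y : B, ε x * y = x * ε y) (z : B) : m.fst (ε z) = ε (m.fst z) :=
  faithR fun c => by
    rw [← fst_mul_right, hc, fst_mul_right, ← hc]

end MHelp

/-- for an equivariant `A,B`-cocycle `(φ₊, φ₋, u₊, u₋)`, the maps
`γ_g(a, m) = (α_g(a), u₊_g β̄_g(m) u₊_g*)` preserve
`A_x = {(a, m) : φ₊(a) - m ∈ B}`, are `*`-endomorphisms of `A_x`, form a unital semigroup
homomorphism, and satisfy `γ_{g g⁻¹}(x) y = x γ_{g g⁻¹}(y)`; hence `(A_x, γ)` is a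
`G`-algebra. -/
theorem mapping_algebra_is_G_algebra
    {G : Type*} [InverseMonoid G] {A : Type*} [NonUnitalCStarAlgebra A]
    {B : Type*} [NonUnitalCStarAlgebra B]
    -- `(A, α)` is a `G`-algebra:
    (α : G → A →⋆ₙₐ[ℂ] A)
    (hα_one : α 1 = NonUnitalStarAlgHom.id ℂ A)
    (hα_mul : ∀ g h : G, α (g * h) = (α g).comp (α h))
    (hα_central : ∀ (g : G) (x y : A), α (g * g⁻¹) x * y = x * α (g * g⁻¹) y)
    -- `(B, β)` is a `G`-algebra:
    (β : G → B →⋆ₙₐ[ℂ] B)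
    (hβ_one : β 1 = NonUnitalStarAlgHom.id ℂ B)
    (hβ_mul : ∀ g h : G, β (g * h) = (β g).comp (β h))
    (hβ_central : ∀ (g : G) (x y : B), β (g * g⁻¹) x * y = x * β (g * g⁻¹) y)
    -- `β̄` is the extension of `β` to the multiplier algebra `M(B)`:
    (βbar : G → 𝓜(ℂ, B) → 𝓜(ℂ, B))
    (hβbar : ∀ (g : G) (m : 𝓜(ℂ, B)) (b : B), (βbar g m).fst b = β g (m.fst (β g⁻¹ b)))
    -- `(φ₊, φ₋, u₊, u₋)` is an equivariant `A,B`-cocycle: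
    (φp φm : A →⋆ₙₐ[ℂ] 𝓜(ℂ, B))
    (up um : G → 𝓜(ℂ, B))
    (hup₁ : ∀ (g : G) (b : B), (star (up g) * up g).fst b = β (g * g⁻¹) b)
    (hup₂ : ∀ g : G, up (g * g⁻¹) = up g * star (up g))
    (hup₃ : ∀ g h : G, up (g * h) = up g * βbar g (up h))
    (hum₁ : ∀ (g : G) (b : B), (star (um g) * um g).fst b = β (g * g⁻¹) b)
    (hum₂ : ∀ g : G, um (g * g⁻¹) = um g * star (um g))
    (hum₃ : ∀ g h : G, um (g * h) = um g * βbar g (um h))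
    (hcov_p : ∀ (a : A) (g : G), up g * βbar g (φp a) * star (up g) = φp (α g a))
    (hcov_m : ∀ (a : A) (g : G), um g * βbar g (φm a) * star (um g) = φm (α g a))
    (hdiff_φ : ∀ a : A, ∃ b : B, φp a - φm a = (b : 𝓜(ℂ, B)))
    (hdiff_u : ∀ g : G, ∃ b : B, up g - um g = (b : 𝓜(ℂ, B)))
    -- `γ` is the associated `G`-action on `A ⊕ M(B)`:
    (γ : G → A × 𝓜(ℂ, B) → A × 𝓜(ℂ, B))
    (hγ : ∀ (g : G) (p : A × 𝓜(ℂ, B)),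
      γ g p = (α g p.1, up g * βbar g p.2 * star (up g))) :
    -- `γ_g` maps `A_x` into `A_x`:
    (∀ (g : G) (p : A × 𝓜(ℂ, B)), (∃ b : B, φp p.1 - p.2 = (b : 𝓜(ℂ, B))) →
      ∃ b : B, φp (γ g p).1 - (γ g p).2 = (b : 𝓜(ℂ, B))) ∧
    -- each `γ_g` is a `*`-endomorphism of `A_x`:
    (∀ (g : G) (p q : A × 𝓜(ℂ, B)),
      (∃ b : B, φp p.1 - p.2 = (b : 𝓜(ℂ, B))) → (∃ b : B, φp q.1 - q.2 = (b : 𝓜(ℂ, B))) →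
      γ g (p + q) = γ g p + γ g q ∧ γ g (p * q) = γ g p * γ g q) ∧
    (∀ (g : G) (c : ℂ) (p : A × 𝓜(ℂ, B)), (∃ b : B, φp p.1 - p.2 = (b : 𝓜(ℂ, B))) →
      γ g (c • p) = c • γ g p ∧ γ g (star p) = star (γ g p)) ∧
    -- `γ` is a unital semigroup homomorphism:
    (∀ p : A × 𝓜(ℂ, B), (∃ b : B, φp p.1 - p.2 = (b : 𝓜(ℂ, B))) → γ 1 p = p) ∧
    (∀ (g h : G) (p : A × 𝓜(ℂ, B)), (∃ b : B, φp p.1 - p.2 = (b : 𝓜(ℂ, B))) →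
      γ (g * h) p = γ g (γ h p)) ∧
    -- the centrality axiom of a `G`-algebra holds on `A_x`:
    (∀ (g : G) (p q : A × 𝓜(ℂ, B)),
      (∃ b : B, φp p.1 - p.2 = (b : 𝓜(ℂ, B))) → (∃ b : B, φp q.1 - q.2 = (b : 𝓜(ℂ, B))) →
      γ (g * g⁻¹) p * q = p * γ (g * g⁻¹) q) := by
    -- pointwise forms of the homomorphism hypotheses
  have hβm : ∀ (g h : G) (b : B), β (g * h) b = β g (β h b) := fun g h b => by
    rw [hβ_mul]; rfl
  have hβ1 : ∀ b : B, β (1 : G) b = b := fun b => by rw [hβ_one]; rfl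
  have hgig : ∀ g : G, g * (g⁻¹ * g) = g := fun g => by
    rw [← mul_assoc, InverseMonoid.mul_inv_mul]
  have higi : ∀ g : G, g⁻¹ * (g * g⁻¹) = g⁻¹ := fun g => by
    rw [← mul_assoc, InverseMonoid.inv_mul_inv]
  have hcontr' : ∀ (g : G) (z : B), β (g * g⁻¹) (β g z) = β g z := fun g z => by
    rw [← hβm, InverseMonoid.mul_inv_mul]
  have hgcontr : ∀ (g : G) (z : B), β g (β (g⁻¹ * g) z) = β g z := fun g z => by
    rw [← hβm, hgig]
  -- `fst` of any multiplier commutes with the central maps `β (g * g⁻¹)` and `β (g⁻¹ * g)`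
  have hcome : ∀ (g : G) (m : 𝓜(ℂ, B)) (z : B),
      m.fst (β (g * g⁻¹) z) = β (g * g⁻¹) (m.fst z) := fun g m z =>
    MHelp.fst_central_comm m _ (hβ_central g) z
  have hcomi : ∀ (g : G) (m : 𝓜(ℂ, B)) (z : B),
      m.fst (β (g⁻¹ * g) z) = β (g⁻¹ * g) (m.fst z) := by
    intro g m z
    have h := MHelp.fst_central_comm m _ (hβ_central g⁻¹) z
    rwa [IMHelp.inv_inv'] at h
  -- `βbar g` is multiplicative
  have hbar_mul : ∀ (g : G) (m n : 𝓜(ℂ, B)), βbar g m * βbar g n = βbar g (m * n) := by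
    intro g m n
    apply MHelp.mext; intro b
    rw [MHelp.mulfst, hβbar, hβbar, hβbar, MHelp.mulfst, ← hβm g⁻¹ g, hcomi, hgcontr]
  -- `βbar g` is additive, ℂ-linear, sub-preserving and star-preserving
  have hbar_add : ∀ (g : G) (m n : 𝓜(ℂ, B)), βbar g (m + n) = βbar g m + βbar g n := by
    intro g m n
    apply MHelp.mext; intro b
    simp [hβbar, MHelp.addfst, map_add]
  have hbar_sub : ∀ (g : G) (m n : 𝓜(ℂ, B)), βbar g (m - n) = βbar g m - βbar g n := by
    intro g m n
    apply MHelp.mext; intro b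
    simp [hβbar, MHelp.subfst, map_sub]
  have hbar_smul : ∀ (g : G) (c : ℂ) (m : 𝓜(ℂ, B)), βbar g (c • m) = c • βbar g m := by
    intro g c m
    apply MHelp.mext; intro b
    simp [hβbar, MHelp.smulfst, map_smul]
  have hkey : ∀ (g : G) (m : 𝓜(ℂ, B)) (x y : B),
      x * β g (m.fst (β g⁻¹ y)) = β g (m.snd (β g⁻¹ x)) * y := by
    intro g m x y
    calc x * β g (m.fst (β g⁻¹ y))
        = x * β (g * g⁻¹) (β g (m.fst (β g⁻¹ y))) := by rw [hcontr']
      _ = β (g * g⁻¹) x * β g (m.fst (β g⁻¹ y)) := (hβ_central g _ _).symm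
      _ = β g (β g⁻¹ x) * β g (m.fst (β g⁻¹ y)) := by rw [hβm g g⁻¹ x]
      _ = β g (β g⁻¹ x * m.fst (β g⁻¹ y)) := (map_mul _ _ _).symm
      _ = β g (m.snd (β g⁻¹ x) * β g⁻¹ y) := by rw [m.central]
      _ = β g (m.snd (β g⁻¹ x)) * β g (β g⁻¹ y) := map_mul _ _ _
      _ = β g (m.snd (β g⁻¹ x)) * β (g * g⁻¹) y := by rw [← hβm g g⁻¹ y]
      _ = β (g * g⁻¹) (β g (m.snd (β g⁻¹ x))) * y := (hβ_central g _ _).symm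
      _ = β g (m.snd (β g⁻¹ x)) * y := by rw [hcontr']
  have hbar_star : ∀ (g : G) (m : 𝓜(ℂ, B)), βbar g (star m) = star (βbar g m) := by
    intro g m
    apply MHelp.mext; intro b
    apply MHelp.faithL; intro c
    have e1 : (βbar g (star m)).fst b = star (β g (m.snd (β g⁻¹ (star b)))) := by
      rw [hβbar, DoubleCentralizer.star_fst, ← map_star (β g⁻¹) b, map_star (β g)]
    have e2 : (star (βbar g m)).fst b = star ((βbar g m).snd (star b)) :=
      DoubleCentralizer.star_fst _ _
    have e3 : ∀ X : B, c * star X = star (X * star c) := fun X => by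
      rw [star_mul, star_star]
    rw [e1, e2, e3, e3]
    congr 1
    rw [(βbar g m).central, hβbar]
    exact (hkey g m (star b) (star c)).symm
  -- `βbar g` maps `B` into `B`
  have hbar_coe : ∀ (g : G) (x : B), βbar g ((x : 𝓜(ℂ, B))) = ((β g x : B) : 𝓜(ℂ, B)) := by
    intro g x
    apply MHelp.mext; intro b
    rw [hβbar, MHelp.coefst, MHelp.coefst, map_mul, ← hβm g g⁻¹ b, ← hβ_central g, hcontr']
  -- absorption: `βbar g m * (up g)* (up g) = βbar g m`
  have hE : ∀ (g : G) (m : 𝓜(ℂ, B)), βbar g m * (star (up g) * up g) = βbar g m := by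
    intro g m
    apply MHelp.mext; intro b
    rw [MHelp.mulfst, hup₁, hβbar, hβbar, ← hβm g⁻¹ (g * g⁻¹), higi]
  have hTmul : ∀ (g : G) (m n : 𝓜(ℂ, B)),
      up g * βbar g (m * n) * star (up g)
        = (up g * βbar g m * star (up g)) * (up g * βbar g n * star (up g)) := by
    intro g m n
    conv_rhs =>
      rw [show (up g * βbar g m * star (up g)) * (up g * βbar g n * star (up g))
          = up g * (βbar g m * (star (up g) * up g)) * βbar g n * star (up g) by
        simp only [mul_assoc]]
    rw [hE, mul_assoc (up g) (βbar g m) (βbar g n), hbar_mul]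
  have hbar_comp : ∀ (g h : G) (m : 𝓜(ℂ, B)), βbar (g * h) m = βbar g (βbar h m) := by
    intro g h m
    apply MHelp.mext; intro b
    rw [hβbar, hβbar, hβbar, hβm g h, IMHelp.mul_inv_rev', hβm h⁻¹ g⁻¹]
  -- unit facts
  have h1inv : (1 : G)⁻¹ = 1 := IMHelp.inv_one'
  have hup1 : up (1 : G) = 1 := by
    have ha : up (1 : G) = up 1 * star (up 1) := by
      have h := hup₂ (1 : G); rwa [h1inv, mul_one] at h
    have hsa : star (up (1 : G)) = up 1 := by
      conv_lhs => rw [ha]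
      rw [star_mul, star_star]; exact ha.symm
    have hEE : star (up (1 : G)) * up 1 = (1 : 𝓜(ℂ, B)) := by
      apply MHelp.mext; intro b
      rw [hup₁, h1inv, mul_one, hβ1, MHelp.onefst]
    calc up (1 : G) = up 1 * star (up 1) := ha
      _ = star (up 1) * up 1 := by rw [hsa]
      _ = 1 := hEE
  have hbar1 : ∀ m : 𝓜(ℂ, B), βbar (1 : G) m = m := by
    intro m
    apply MHelp.mext; intro b
    rw [hβbar, h1inv, hβ1, hβ1]
  -- the parts of the centrality statement for an idempotent `e = g * g⁻¹`
  refine ⟨?_, ?_, ?_, ?_, ?_, ?_⟩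
  · -- membership preservation
    rintro g p ⟨b, hb⟩
    refine ⟨(star (up g)).snd ((up g).fst (β g b)), ?_⟩
    rw [hγ]
    show φp (α g p.1) - up g * βbar g p.2 * star (up g) = _
    rw [← hcov_p p.1 g]
    calc up g * βbar g (φp p.1) * star (up g) - up g * βbar g p.2 * star (up g)
        = up g * (βbar g (φp p.1) - βbar g p.2) * star (up g) := by
          rw [mul_sub, sub_mul]
      _ = up g * βbar g (φp p.1 - p.2) * star (up g) := by rw [hbar_sub]
      _ = up g * ((β g b : B) : 𝓜(ℂ, B)) * star (up g) := by rw [hb, hbar_coe]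
      _ = _ := by rw [MHelp.mul_coe, MHelp.coe_mul]
  · -- additivity and multiplicativity
    intro g p q _ _
    constructor
    · rw [hγ, hγ, hγ, Prod.fst_add, Prod.snd_add, map_add, hbar_add,
        mul_add, add_mul, Prod.mk_add_mk]
    · rw [hγ, hγ, hγ, Prod.fst_mul, Prod.snd_mul, map_mul, hTmul, Prod.mk_mul_mk]
  · -- ℂ-linearity and star-preservation
    intro g c p _
    constructor
    · rw [hγ, hγ, Prod.smul_fst, Prod.smul_snd, map_smul, hbar_smul,
        mul_smul_comm, smul_mul_assoc, Prod.smul_mk]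
    · rw [hγ, hγ]
      have h1 : α g (star p).1 = star (α g p.1) := by rw [Prod.fst_star, map_star]
      have h2 : up g * βbar g (star p).2 * star (up g)
          = star (up g * βbar g p.2 * star (up g)) := by
        rw [Prod.snd_star, hbar_star, star_mul, star_mul, star_star]
        simp only [mul_assoc]
      rw [h1, h2]
      rfl
  · -- unitality
    intro p _
    rw [hγ]
    have h1 : α 1 p.1 = p.1 := by rw [hα_one]; rfl
    rw [h1, hup1, hbar1, star_one, one_mul, mul_one]
  · -- multiplicativity in `G`
    intro g h p _
    rw [hγ, hγ, hγ]
    refine Prod.ext ?_ ?_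
    · show α (g * h) p.1 = α g (α h p.1)
      rw [hα_mul]; rfl
    · show up (g * h) * βbar (g * h) p.2 * star (up (g * h))
        = up g * βbar g (up h * βbar h p.2 * star (up h)) * star (up g)
      rw [hup₃ g h, hbar_comp, star_mul, ← hbar_star]
      conv_rhs => rw [← hbar_mul g (up h * βbar h p.2) (star (up h)),
        ← hbar_mul g (up h) (βbar h p.2)]
      simp only [mul_assoc]
  · -- centrality
    intro g p q _ _
    have hee : (g * g⁻¹) * (g * g⁻¹) = g * g⁻¹ := IMHelp.gg_idem g
    have heinv : (g * g⁻¹)⁻¹ = g * g⁻¹ := IMHelp.idem_inv hee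
    have hβee : ∀ z : B, β (g * g⁻¹) (β (g * g⁻¹) z) = β (g * g⁻¹) z := fun z => by
      rw [← hβm, hee]
    have hv : up (g * g⁻¹) = up (g * g⁻¹) * star (up (g * g⁻¹)) := by
      have h := hup₂ (g * g⁻¹); rwa [heinv, hee] at h
    have hvsa : star (up (g * g⁻¹)) = up (g * g⁻¹) := by
      conv_lhs => rw [hv]
      rw [star_mul, star_star]; exact hv.symm
    have hvfst : ∀ b : B, (up (g * g⁻¹)).fst b = β (g * g⁻¹) b := by
      intro b
      have h1 := hup₁ (g * g⁻¹) b
      rw [heinv, hee] at h1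
      have h2 : star (up (g * g⁻¹)) * up (g * g⁻¹) = up (g * g⁻¹) := by
        rw [hvsa]; conv_rhs => rw [hv, hvsa]
      rw [h2] at h1; exact h1
    have hTfst : ∀ (m : 𝓜(ℂ, B)) (b : B),
        (up (g * g⁻¹) * βbar (g * g⁻¹) m * star (up (g * g⁻¹))).fst b
          = β (g * g⁻¹) (m.fst (β (g * g⁻¹) b)) := by
      intro m b
      rw [MHelp.mulfst, MHelp.mulfst, hvsa, hvfst b, hβbar, heinv, hβee b, hvfst, hβee]
    rw [hγ, hγ]
    refine Prod.ext ?_ ?_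
    · show α (g * g⁻¹) p.1 * q.1 = p.1 * α (g * g⁻¹) q.1
      exact hα_central g p.1 q.1
    · show (up (g * g⁻¹) * βbar (g * g⁻¹) p.2 * star (up (g * g⁻¹))) * q.2
        = p.2 * (up (g * g⁻¹) * βbar (g * g⁻¹) q.2 * star (up (g * g⁻¹)))
      apply MHelp.mext; intro b
      rw [MHelp.mulfst (up (g * g⁻¹) * βbar (g * g⁻¹) p.2 * star (up (g * g⁻¹))) q.2 b,
        MHelp.mulfst p.2 (up (g * g⁻¹) * βbar (g * g⁻¹) q.2 * star (up (g * g⁻¹))) b,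
        hTfst p.2, hTfst q.2]
      rw [hcome g p.2 (q.2.fst b), hβee, hcome g q.2 b, hβee, hcome g p.2 (q.2.fst b)]
end

section
/- Let G be a unital inverse semigroup, (A, α) and (B, β) G-algebras, and let (φ₊, φ₋, u₊, u₋) be an equivariant A,B-cocycle (with B in place of B ⊗ K). Set A_x := {(a, m) ∈ A ⊕ M(B) : φ₊(a) − m ∈ B}. Then for every g ∈ G the map u_g(a, m) := (α_{g g⁻¹}(a), u₋_g u₊_g* m) maps A_x into A_x; that is, φ₊(α_{g g⁻¹}(a)) − u₋_g u₊_g* m ∈ B whenever φ₊(a) − m ∈ B. -/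
open scoped MultiplierAlgebra

section Aux

variable {B : Type*} [NonUnitalCStarAlgebra B]

lemma aux_eq_of_forall_mul_right {x y : B} (h : ∀ c : B, x * c = y * c) : x = y := by
  have h0 : (x - y) * star (x - y) = 0 := by rw [sub_mul, h, sub_self]
  have := (CStarRing.mul_star_self_eq_zero_iff (x - y)).mp h0
  rwa [sub_eq_zero] at this

lemma aux_eq_of_forall_mul_left {x y : B} (h : ∀ c : B, c * x = c * y) : x = y := by
  have h0 : star (x - y) * (x - y) = 0 := by rw [mul_sub, h, sub_self]
  have := (CStarRing.star_mul_self_eq_zero_iff (x - y)).mp h0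
  rwa [sub_eq_zero] at this

lemma aux_fst_ext {m n : 𝓜(ℂ, B)} (h : ∀ b : B, m.fst b = n.fst b) : m = n := by
  apply DoubleCentralizer.ext
  refine Prod.ext (ContinuousLinearMap.ext h) (ContinuousLinearMap.ext fun b => ?_)
  exact aux_eq_of_forall_mul_right fun c => by rw [m.central, n.central, h]

/-- the left action of a multiplier is a right `B`-module map -/
lemma aux_fst_mul (m : 𝓜(ℂ, B)) (b c : B) : m.fst (b * c) = m.fst b * c := by
  refine aux_eq_of_forall_mul_left fun d => ?_
  calc d * m.fst (b * c) = m.snd d * (b * c) := (m.central d (b * c)).symm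
    _ = m.snd d * b * c := (mul_assoc _ _ _).symm
    _ = d * m.fst b * c := by rw [m.central]
    _ = d * (m.fst b * c) := mul_assoc _ _ _

lemma aux_mul_fst_apply (m n : 𝓜(ℂ, B)) (b : B) : (m * n).fst b = m.fst (n.fst b) := rfl

lemma aux_coe_fst_apply (b c : B) : ((b : 𝓜(ℂ, B)).fst c) = b * c := rfl

/-- `B` is a right ideal in `𝓜(ℂ, B)` -/
lemma aux_mul_coe (m : 𝓜(ℂ, B)) (b : B) : m * (b : 𝓜(ℂ, B)) = ((m.fst b : B) : 𝓜(ℂ, B)) := by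
  refine aux_fst_ext fun c => ?_
  rw [aux_mul_fst_apply, aux_coe_fst_apply, aux_coe_fst_apply, aux_fst_mul]

/-- `B` is a left ideal in `𝓜(ℂ, B)` -/
lemma aux_coe_mul (m : 𝓜(ℂ, B)) (b : B) : (b : 𝓜(ℂ, B)) * m = ((m.snd b : B) : 𝓜(ℂ, B)) := by
  refine aux_fst_ext fun c => ?_
  rw [aux_mul_fst_apply, aux_coe_fst_apply, aux_coe_fst_apply, m.central]

lemma aux_coe_add (b c : B) : ((b + c : B) : 𝓜(ℂ, B)) = (b : 𝓜(ℂ, B)) + (c : 𝓜(ℂ, B)) := by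
  refine aux_fst_ext fun d => ?_
  rw [aux_coe_fst_apply, DoubleCentralizer.add_fst]
  simp only [ContinuousLinearMap.add_apply]
  rw [aux_coe_fst_apply, aux_coe_fst_apply, add_mul]

end Aux

/-- for an equivariant `A,B`-cocycle `(φ₊, φ₋, u₊, u₋)`, the map
`u_g(a, m) = (α_{g g⁻¹}(a), u₋_g u₊_g* m)` maps `A_x = {(a, m) : φ₊(a) - m ∈ B}` into itself:
if `φ₊(a) - m ∈ B` then `φ₊(α_{g g⁻¹}(a)) - u₋_g u₊_g* m ∈ B`. -/
theorem modified_cocycle_preserves_Ax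
    {G : Type*} [InverseMonoid G] {A : Type*} [NonUnitalCStarAlgebra A]
    {B : Type*} [NonUnitalCStarAlgebra B]
    -- `(A, α)` is a `G`-algebra:
    (α : G → A →⋆ₙₐ[ℂ] A)
    (hα_one : α 1 = NonUnitalStarAlgHom.id ℂ A)
    (hα_mul : ∀ g h : G, α (g * h) = (α g).comp (α h))
    (hα_central : ∀ (g : G) (x y : A), α (g * g⁻¹) x * y = x * α (g * g⁻¹) y)
    -- `(B, β)` is a `G`-algebra:
    (β : G → B →⋆ₙₐ[ℂ] B)
    (hβ_one : β 1 = NonUnitalStarAlgHom.id ℂ B)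
    (hβ_mul : ∀ g h : G, β (g * h) = (β g).comp (β h))
    (hβ_central : ∀ (g : G) (x y : B), β (g * g⁻¹) x * y = x * β (g * g⁻¹) y)
    -- `β̄` is the extension of `β` to the multiplier algebra `M(B)`:
    (βbar : G → 𝓜(ℂ, B) → 𝓜(ℂ, B))
    (hβbar : ∀ (g : G) (m : 𝓜(ℂ, B)) (b : B), (βbar g m).fst b = β g (m.fst (β g⁻¹ b)))
    -- `(φ₊, φ₋, u₊, u₋)` is an equivariant `A,B`-cocycle:
    (φp φm : A →⋆ₙₐ[ℂ] 𝓜(ℂ, B))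
    (up um : G → 𝓜(ℂ, B))
    (hup₁ : ∀ (g : G) (b : B), (star (up g) * up g).fst b = β (g * g⁻¹) b)
    (hup₂ : ∀ g : G, up (g * g⁻¹) = up g * star (up g))
    (hup₃ : ∀ g h : G, up (g * h) = up g * βbar g (up h))
    (hum₁ : ∀ (g : G) (b : B), (star (um g) * um g).fst b = β (g * g⁻¹) b)
    (hum₂ : ∀ g : G, um (g * g⁻¹) = um g * star (um g))
    (hum₃ : ∀ g h : G, um (g * h) = um g * βbar g (um h))
    (hcov_p : ∀ (a : A) (g : G), up g * βbar g (φp a) * star (up g) = φp (α g a))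
    (hcov_m : ∀ (a : A) (g : G), um g * βbar g (φm a) * star (um g) = φm (α g a))
    (hdiff_φ : ∀ a : A, ∃ b : B, φp a - φm a = (b : 𝓜(ℂ, B)))
    (hdiff_u : ∀ g : G, ∃ b : B, up g - um g = (b : 𝓜(ℂ, B)))
    : ∀ (g : G) (a : A) (m : 𝓜(ℂ, B)), (∃ b : B, φp a - m = (b : 𝓜(ℂ, B))) →
      ∃ b : B, φp (α (g * g⁻¹) a) - um g * star (up g) * m = (b : 𝓜(ℂ, B)) := by
  rintro g a m ⟨b0, hb0⟩
  obtain ⟨bu, hbu⟩ := hdiff_u g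
  set e := g * g⁻¹ with he
  -- e is idempotent and self-inverse
  have hee : e * e = e := by
    rw [he, ← mul_assoc, InverseMonoid.mul_inv_mul]
  have heee : e * e * e = e := by rw [hee, hee]
  have hinv : e⁻¹ = e := (InverseMonoid.inv_unique heee heee).symm
  set q := up e with hq
  -- q = q * star q
  have h2 : q = q * star q := by
    have := hup₂ e; rwa [hinv, hee] at this
  have hqs : star q = q := by
    conv_lhs => rw [h2]
    rw [star_mul, star_star, ← h2]
  have hid : q * q = q := by
    nth_rewrite 2 [← hqs]
    exact h2.symm
  -- left action of q is β e
  have hqfst : ∀ b : B, q.fst b = β e b := by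
    intro b
    have h1 := hup₁ e b
    rw [hinv, hee] at h1
    calc q.fst b = (q * q).fst b := by rw [hid]
      _ = (star q * q).fst b := by rw [hqs]
      _ = β e b := h1
  have hβee : ∀ b : B, β e (β e b) = β e b := by
    intro b
    have hcomp := hβ_mul e e
    rw [hee] at hcomp
    conv_rhs => rw [hcomp]
    rfl
  have hcent : ∀ x y : B, β e x * y = x * β e y := by
    intro x y; have := hβ_central g x y; rwa [← he] at this
  -- q is central in the multiplier algebra
  have hqcentral : ∀ n : 𝓜(ℂ, B), q * n = n * q := by
    intro n
    refine aux_fst_ext fun b => ?_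
    rw [aux_mul_fst_apply, aux_mul_fst_apply, hqfst, hqfst]
    refine aux_eq_of_forall_mul_right fun c => ?_
    rw [hcent, ← aux_fst_mul, ← aux_fst_mul, hcent]
  -- βbar e n = q * n * q
  have hβbar_e : ∀ n : 𝓜(ℂ, B), βbar e n = q * n * q := by
    intro n
    refine aux_fst_ext fun b => ?_
    rw [hβbar, hinv, aux_mul_fst_apply, aux_mul_fst_apply, hqfst, hqfst]
  -- key: φp (α e a) = q * φp a
  have hkey : φp (α e a) = q * φp a := by
    have h := hcov_p a e
    rw [hβbar_e, hqs] at h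
    rw [← h]
    calc q * (q * φp a * q) * q = q * q * φp a * (q * q) := by noncomm_ring
      _ = q * φp a * q := by rw [hid]
      _ = q * (q * φp a) := by rw [mul_assoc, ← hqcentral]
      _ = q * q * φp a := by rw [mul_assoc]
      _ = q * φp a := by rw [hid]
  have hupq : up g * star (up g) = q := (hup₂ g).symm
  have hum_eq : um g = up g - (bu : 𝓜(ℂ, B)) := by rw [← hbu]; abel
  refine ⟨q.fst b0 + (star (up g) * m).snd bu, ?_⟩
  rw [aux_coe_add, ← aux_mul_coe, ← aux_coe_mul]
  have expand : um g * star (up g) * m = q * m - (bu : 𝓜(ℂ, B)) * (star (up g) * m) := by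
    rw [hum_eq, sub_mul, sub_mul, hupq, mul_assoc]
  rw [hkey, expand, ← hb0, mul_sub]
  abel
end
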